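/- arXiv:1102.3577 — 4 statements merged into one kernel-verified Lean document; each statement's English description precedes it below -/
import Mathlib

section
/- Let μ be a finite complex measure on the circle 𝕋 = ℝ/2ℤ. If μ̂(n) → 0 as n → −∞, then also μ̂(n) → 0 as n → +∞. -/
/-!
Write `μ = w ν` with `ν = |Re μ| + |Im μ|` and `w = dμ/dν ∈ L¹(ν)`, and put
`M_f(n) = ∫ e_n f dν`. By hypothesis `M_w(n) → 0` as `n → -∞`. Multiplying `w` by `e_m` shifts
`M_w`, so `M_{p w} → 0` at `-∞` for every trigonometric polynomial `p`. Since
`|M_f - M_g| ≤ ‖f - g‖_{L¹(ν)}` uniformly in `n`, this passes to uniform limits of trigonometric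
polynomials, i.e. to all continuous `p`, and then to all bounded measurable `u`, which are
`L¹(|w| ν)`-limits of continuous functions. For `u = w̄ / w` (which is `0` where `w = 0`) we get
`M_{w̄} → 0` at `-∞`, and `M_{w̄}(-n) = conj (M_w(n))` gives `M_w → 0` at `+∞`.
-/

open MeasureTheory Filter Metric Set

noncomputable section

instance : Fact ((0:ℝ) < 2) := ⟨two_pos⟩

/-- The circle `𝕋 = ℝ/2ℤ`. -/
abbrev Circle2 := AddCircle (2 : ℝ)

/-- Integral of `f` against a complex measure, defined via the Jordan decompositions of the
real and imaginary parts. -/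
def cmIntegral (μ : ComplexMeasure Circle2) (f : Circle2 → ℂ) : ℂ :=
  ((∫ x, f x ∂μ.re.toJordanDecomposition.posPart) -
      ∫ x, f x ∂μ.re.toJordanDecomposition.negPart) +
    Complex.I * ((∫ x, f x ∂μ.im.toJordanDecomposition.posPart) -
      ∫ x, f x ∂μ.im.toJordanDecomposition.negPart)

/-- The Fourier coefficient `μ̂(n) = (1/2) ∫_𝕋 e^{iπnx} dμ(x)`; here `fourier n x = exp (iπnx)`
on `AddCircle 2`. -/
def cmFourierCoeff (μ : ComplexMeasure Circle2) (n : ℤ) : ℂ :=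
  (1 / 2 : ℂ) * cmIntegral μ (fun x => fourier n x)

/-- The support of the Fourier transform of `μ`. -/
def fourierSupport (μ : ComplexMeasure Circle2) : Set ℤ := {n | cmFourierCoeff μ n ≠ 0}

/-- A positive measure with the same null sets as the total variation `|μ|`. -/
def cmVariation (μ : ComplexMeasure Circle2) : Measure Circle2 :=
  μ.re.totalVariation + μ.im.totalVariation

/-- `μ` is concentrated on `E`, i.e. `|μ|(𝕋 ∖ E) = 0`. -/
def ConcentratedOn (μ : ComplexMeasure Circle2) (E : Set Circle2) : Prop :=
  cmVariation μ Eᶜ = 0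

/-- `Λ ⊆ ℤ` is a Rajchman set. -/
def IsRajchman (Λ : Set ℤ) : Prop :=
  ∀ μ : ComplexMeasure Circle2,
    Tendsto (cmFourierCoeff μ) (Filter.cofinite ⊓ Filter.principal Λᶜ) (nhds 0) →
    Tendsto (cmFourierCoeff μ) (Filter.cofinite ⊓ Filter.principal Λ) (nhds 0)

/-- `Λ ⊆ ℤ` is a Riesz set. -/
def IsRiesz (Λ : Set ℤ) : Prop :=
  ∀ μ : ComplexMeasure Circle2, fourierSupport μ ⊆ Λ →
    μ ≪ᵥ (volume : Measure Circle2).toENNRealVectorMeasure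

/-- `E ⊆ 𝕋` is a parisian set. -/
def IsParisian (E : Set Circle2) : Prop :=
  ∀ μ : ComplexMeasure Circle2, ConcentratedOn μ E →
    ¬ μ ≪ᵥ (volume : Measure Circle2).toENNRealVectorMeasure →
    ¬ IsRajchman (fourierSupport μ)

/-- `Ω((n_j)) = {∑ ε_j n_j : ε_j ∈ {-1,0,1}, finitely many nonzero}`. -/
def Omega (n : ℕ → ℤ) : Set ℤ :=
  {k | ∃ (F : Finset ℕ) (ε : ℕ → ℤ),
    (∀ j, ε j = -1 ∨ ε j = 0 ∨ ε j = 1) ∧ k = ∑ j ∈ F, ε j * n j}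

/-- The image of `(2/N)ℤ` in `𝕋`. -/
def grid (N : ℕ) : Set Circle2 := Set.range fun k : ℤ => ((2 * k / N : ℝ) : Circle2)

/-- `A(N,δ)`: the points of `𝕋` within distance `1/(2N^{1+δ})` of `(2/N)ℤ`. -/
def nbhdGrid (N : ℕ) (δ : ℝ) : Set Circle2 :=
  {x | Metric.infDist x (grid N) ≤ 1 / (2 * (N : ℝ) ^ ((1 : ℝ) + δ))}

/-- `Ẽ = {x ∈ 𝕋 : sup_j N_j^{1+δ}·dist(x, (2/N_j)ℤ) < ∞}`. -/
def Etilde (N : ℕ → ℕ) (δ : ℝ) : Set Circle2 :=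
  {x | ∃ C : ℝ, ∀ j, (N j : ℝ) ^ ((1 : ℝ) + δ) * Metric.infDist x (grid (N j)) ≤ C}

/-- The total variation norm `‖μ‖` of a complex measure, as the supremum of
`∑ |μ(B i)|` over finite disjoint families of measurable sets. -/
def cmNorm (μ : ComplexMeasure Circle2) : ℝ :=
  sSup {r : ℝ | ∃ (n : ℕ) (B : Fin n → Set Circle2), (∀ i, MeasurableSet (B i)) ∧
    (∀ i j, i ≠ j → Disjoint (B i) (B j)) ∧ r = ∑ i, ‖μ (B i)‖}

/-- Fourier coefficient of a positive measure. -/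
def posFourierCoeff (μ : Measure Circle2) (n : ℤ) : ℂ :=
  (1 / 2 : ℂ) * ∫ x, fourier n x ∂μ

open scoped ComplexConjugate Topology BoundedContinuousFunction

lemma MeasureTheory.Integrable.continuousMap_mul {α : Type*} [TopologicalSpace α] [CompactSpace α]
    [MeasurableSpace α] [OpensMeasurableSpace α] {μ : Measure α} {w : α → ℂ}
    (hw : Integrable w μ) (p : C(α, ℂ)) : Integrable (fun x => p x * w x) μ :=
  hw.bdd_mul p.continuous.aestronglyMeasurable (.of_forall p.norm_coe_le_norm)

lemma exists_boundedContinuous_integral_norm_mul_sub_lt {α : Type*} [PseudoMetricSpace α]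
    [MeasurableSpace α] [BorelSpace α] {μ : Measure α} {u w : α → ℂ} {C ε : ℝ}
    (hw : Integrable w μ) (hu : AEStronglyMeasurable u μ) (hub : ∀ x, ‖u x‖ ≤ C) (hε : 0 < ε) :
    ∃ φ : α →ᵇ ℂ, ∫ x, ‖u x * w x - φ x * w x‖ ∂μ < ε := by
  -- approximate `u` in `L¹(|w| μ)`
  let τ := μ.withDensity fun x => ‖w x‖₊
  have : IsFiniteMeasure τ := isFiniteMeasure_withDensity hw.2.ne
  have huτ : Integrable u τ :=
    .of_bound (hu.mono_ac (withDensity_absolutelyContinuous _ _)) C (.of_forall hub)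
  obtain ⟨φ, hφ, -⟩ := huτ.exists_boundedContinuous_integral_sub_le (half_pos hε)
  refine ⟨φ, lt_of_eq_of_lt ?_ (hφ.trans_lt (half_lt_self hε))⟩
  rw [integral_withDensity_eq_integral_smul₀ hw.aemeasurable.nnnorm]
  congr 1 with x
  rw [NNReal.smul_def, smul_eq_mul, coe_nnnorm, ← sub_mul, norm_mul, mul_comm]

section FourierMoment

variable {T : ℝ} {ν : Measure (AddCircle T)} {f g w : AddCircle T → ℂ}

def fourierMoment (ν : Measure (AddCircle T)) (f : AddCircle T → ℂ) (n : ℤ) : ℂ :=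
  ∫ x, fourier n x * f x ∂ν

lemma norm_fourier_apply (n : ℤ) (x : AddCircle T) : ‖fourier n x‖ = 1 :=
  Circle.norm_coe _

lemma norm_fourierMoment_le (f : AddCircle T → ℂ) (n : ℤ) :
    ‖fourierMoment ν f n‖ ≤ ∫ x, ‖f x‖ ∂ν :=
  (norm_integral_le_integral_norm _).trans_eq <| by
    simp only [norm_mul, norm_fourier_apply, one_mul]

lemma fourierMoment_fourier_mul (m n : ℤ) :
    fourierMoment ν (fun x => fourier m x * f x) n = fourierMoment ν f (n + m) := by
  simp only [fourierMoment, fourier_add, mul_assoc]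

lemma fourierMoment_const_mul (c : ℂ) (n : ℤ) :
    fourierMoment ν (fun x => c * f x) n = c * fourierMoment ν f n := by
  simp only [fourierMoment, ← integral_const_mul, mul_left_comm]

lemma MeasureTheory.Integrable.fourier_mul (hf : Integrable f ν) (n : ℤ) :
    Integrable (fun x => fourier n x * f x) ν :=
  hf.bdd_mul (fourier n).continuous.aestronglyMeasurable
    (.of_forall fun x => (norm_fourier_apply n x).le)

lemma fourierMoment_add (hf : Integrable f ν) (hg : Integrable g ν) (n : ℤ) :
    fourierMoment ν (f + g) n = fourierMoment ν f n + fourierMoment ν g n := by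
  simp only [fourierMoment, ← integral_add (hf.fourier_mul n) (hg.fourier_mul n), Pi.add_apply,
    mul_add]

lemma fourierMoment_sub (hf : Integrable f ν) (hg : Integrable g ν) (n : ℤ) :
    fourierMoment ν (f - g) n = fourierMoment ν f n - fourierMoment ν g n := by
  simp only [fourierMoment, ← integral_sub (hf.fourier_mul n) (hg.fourier_mul n), Pi.sub_apply,
    mul_sub]


lemma fourierMoment_neg_conj (f : AddCircle T → ℂ) (n : ℤ) :
    fourierMoment ν (fun x => conj (f x)) (-n) = conj (fourierMoment ν f n) := by
  simp only [fourierMoment, ← integral_conj, map_mul, fourier_neg]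

lemma tendsto_fourierMoment_of_approx {l : Filter ℤ} (hf : Integrable f ν)
    (happrox : ∀ ε > 0, ∃ g, Integrable g ν ∧ ∫ x, ‖f x - g x‖ ∂ν < ε ∧
      Tendsto (fourierMoment ν g) l (𝓝 0)) :
    Tendsto (fourierMoment ν f) l (𝓝 0) := by
  refine Metric.tendsto_nhds.mpr fun ε hε => ?_
  obtain ⟨g, hg, hfg, hlim⟩ := happrox (ε / 2) (half_pos hε)
  filter_upwards [Metric.tendsto_nhds.mp hlim (ε / 2) (half_pos hε)] with n hn
  rw [dist_zero_right] at hn ⊢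
  calc ‖fourierMoment ν f n‖ ≤ ‖fourierMoment ν (f - g) n‖ + ‖fourierMoment ν g n‖ := by
        rw [fourierMoment_sub hf hg]; exact norm_le_norm_sub_add _ _
    _ < ε / 2 + ε / 2 := add_lt_add_of_le_of_lt ((norm_fourierMoment_le _ n).trans hfg.le) hn
    _ = ε := add_halves ε

variable [Fact (0 < T)]

lemma tendsto_fourierMoment_mul_of_mem_span (hw : Integrable w ν)
    (h : Tendsto (fourierMoment ν w) atBot (𝓝 0)) {p : C(AddCircle T, ℂ)}
    (hp : p ∈ Submodule.span ℂ (range (@fourier T))) :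
    Tendsto (fourierMoment ν fun x => p x * w x) atBot (𝓝 0) := by
  induction hp using Submodule.span_induction with
  | mem p hp =>
    obtain ⟨m, rfl⟩ := hp
    exact (h.comp (tendsto_atBot_add_const_right _ m tendsto_id)).congr fun n =>
      (fourierMoment_fourier_mul m n).symm
  | zero => exact tendsto_const_nhds.congr fun n => by simp [fourierMoment]
  | add p q _ _ hp hq =>
    refine (add_zero (0 : ℂ) ▸ hp.add hq).congr fun n => ?_
    rw [← fourierMoment_add (hw.continuousMap_mul p) (hw.continuousMap_mul q)]
    simp only [fourierMoment, Pi.add_apply, ContinuousMap.add_apply, add_mul]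
  | smul c p _ hp =>
    refine (mul_zero c ▸ hp.const_mul c).congr fun n => ?_
    simp only [← fourierMoment_const_mul, ContinuousMap.smul_apply, smul_eq_mul, mul_assoc]

lemma tendsto_fourierMoment_continuousMap_mul (hw : Integrable w ν)
    (h : Tendsto (fourierMoment ν w) atBot (𝓝 0)) (p : C(AddCircle T, ℂ)) :
    Tendsto (fourierMoment ν fun x => p x * w x) atBot (𝓝 0) := by
  refine tendsto_fourierMoment_of_approx (hw.continuousMap_mul p) fun ε hε => ?_
  set W := ∫ x, ‖w x‖ ∂ν
  have hW : 0 ≤ W := integral_nonneg fun x => norm_nonneg _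
  have hp : p ∈ closure (Submodule.span ℂ (range (@fourier T)) : Set C(AddCircle T, ℂ)) := by
    rw [← Submodule.topologicalClosure_coe, span_fourier_closure_eq_top]; trivial
  obtain ⟨q, hq, hpq⟩ := Metric.mem_closure_iff.mp hp (ε / (W + 1)) (by positivity)
  refine ⟨_, hw.continuousMap_mul q, ?_, tendsto_fourierMoment_mul_of_mem_span hw h hq⟩
  rw [dist_eq_norm, lt_div_iff₀ (by positivity)] at hpq
  calc ∫ x, ‖p x * w x - q x * w x‖ ∂ν ≤ ∫ x, ‖p - q‖ * ‖w x‖ ∂ν := by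
        refine integral_mono (((hw.continuousMap_mul p).sub (hw.continuousMap_mul q)).norm)
          (hw.norm.const_mul _) fun x => ?_
        rw [← sub_mul, norm_mul]
        exact mul_le_mul_of_nonneg_right ((p - q).norm_coe_le_norm x) (norm_nonneg _)
    _ = ‖p - q‖ * W := integral_const_mul _ _
    _ ≤ ‖p - q‖ * (W + 1) := by gcongr; linarith
    _ < ε := hpq

lemma tendsto_fourierMoment_mul_of_bounded {u : AddCircle T → ℂ} {C : ℝ} (hw : Integrable w ν)
    (h : Tendsto (fourierMoment ν w) atBot (𝓝 0)) (hu : AEStronglyMeasurable u ν)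
    (hub : ∀ x, ‖u x‖ ≤ C) :
    Tendsto (fourierMoment ν fun x => u x * w x) atBot (𝓝 0) :=
  tendsto_fourierMoment_of_approx (hw.bdd_mul hu (.of_forall hub)) fun _ hε =>
    let ⟨φ, hφ⟩ := exists_boundedContinuous_integral_norm_mul_sub_lt hw hu hub hε
    ⟨_, hw.continuousMap_mul φ.toContinuousMap, hφ,
      tendsto_fourierMoment_continuousMap_mul hw h φ.toContinuousMap⟩

theorem tendsto_fourierMoment_atTop_of_atBot (hw : Integrable w ν)
    (h : Tendsto (fourierMoment ν w) atBot (𝓝 0)) :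
    Tendsto (fourierMoment ν w) atTop (𝓝 0) := by
  have hconj : Tendsto (fourierMoment ν fun x => conj (w x)) atBot (𝓝 0) := by
    have hu : AEStronglyMeasurable (fun x => conj (w x) / w x) ν :=
      ((Complex.continuous_conj.measurable.comp_aemeasurable hw.aemeasurable).div
        hw.aemeasurable).aestronglyMeasurable
    have hub (x : AddCircle T) : ‖conj (w x) / w x‖ ≤ 1 := by
      rw [norm_div, Complex.norm_conj]; exact div_self_le_one _
    have hcancel : (fun x => conj (w x) / w x * w x) = fun x => conj (w x) :=
      funext fun x => div_mul_cancel_of_imp fun hx => by simp [hx]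
    simpa only [hcancel] using tendsto_fourierMoment_mul_of_bounded hw h hu hub
  have hlim := (Complex.continuous_conj.tendsto 0).comp (hconj.comp tendsto_neg_atTop_atBot)
  simpa only [Function.comp_def, fourierMoment_neg_conj, Complex.conj_conj, map_zero] using hlim

end FourierMoment

lemma MeasureTheory.SignedMeasure.integral_posPart_sub_integral_negPart {α : Type*}
    [MeasurableSpace α] (s : SignedMeasure α) {ν : Measure α} [SigmaFinite ν]
    (hs : s.totalVariation ≪ ν) {f : α → ℂ} {C : ℝ} (hf : AEStronglyMeasurable f ν)
    (hfC : ∀ x, ‖f x‖ ≤ C) :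
    ∫ x, f x ∂s.toJordanDecomposition.posPart - ∫ x, f x ∂s.toJordanDecomposition.negPart =
      ∫ x, f x * s.rnDeriv ν x ∂ν := by
  have hpos : s.toJordanDecomposition.posPart ≪ ν :=
    (Measure.le_add_right le_rfl).absolutelyContinuous.trans hs
  have hneg : s.toJordanDecomposition.negPart ≪ ν :=
    (Measure.le_add_left le_rfl).absolutelyContinuous.trans hs
  have hint (ρ : Measure α) [IsFiniteMeasure ρ] :
      Integrable (fun x => (ρ.rnDeriv ν x).toReal • f x) ν :=
    Measure.integrable_toReal_rnDeriv.smul_bdd C hf (.of_forall hfC)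
  rw [← integral_rnDeriv_smul hpos, ← integral_rnDeriv_smul hneg,
    ← integral_sub (hint _) (hint _)]
  congr 1 with x
  simp only [SignedMeasure.rnDeriv_def, Complex.real_smul, Complex.ofReal_sub]
  ring

instance (μ : ComplexMeasure Circle2) : IsFiniteMeasure (cmVariation μ) := by
  unfold cmVariation; infer_instance

lemma cmIntegral_eq_integral_mul_rnDeriv (μ : ComplexMeasure Circle2) {f : Circle2 → ℂ} {C : ℝ}
    (hf : AEStronglyMeasurable f (cmVariation μ)) (hfC : ∀ x, ‖f x‖ ≤ C) :
    cmIntegral μ f = ∫ x, f x * μ.rnDeriv (cmVariation μ) x ∂cmVariation μ := by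
  have hint (s : SignedMeasure Circle2) :
      Integrable (fun x => f x * (s.rnDeriv (cmVariation μ) x : ℂ)) (cmVariation μ) :=
    (s.integrable_rnDeriv _).ofReal.bdd_mul hf (.of_forall hfC)
  have hre_ac : μ.re.totalVariation ≪ cmVariation μ :=
    (Measure.le_add_right le_rfl).absolutelyContinuous
  have him_ac : μ.im.totalVariation ≪ cmVariation μ :=
    (Measure.le_add_left le_rfl).absolutelyContinuous
  rw [cmIntegral, μ.re.integral_posPart_sub_integral_negPart hre_ac hf hfC,
    μ.im.integral_posPart_sub_integral_negPart him_ac hf hfC, ← integral_const_mul,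
    ← integral_add (hint _) ((hint _).const_mul _)]
  refine integral_congr_ae (.of_forall fun x => ?_)
  simp only [ComplexMeasure.rnDeriv, Complex.mk_eq_add_mul_I]
  ring

lemma cmFourierCoeff_eq_fourierMoment (μ : ComplexMeasure Circle2) :
    cmFourierCoeff μ =
      fun n => 1 / 2 * fourierMoment (cmVariation μ) (μ.rnDeriv (cmVariation μ)) n :=
  funext fun n => congrArg _ <| cmIntegral_eq_integral_mul_rnDeriv μ
    (fourier n).continuous.aestronglyMeasurable fun x => (norm_fourier_apply n x).le

/-- **Rajchman, 1929.** If `μ̂(n) → 0` as `n → -∞`, then `μ̂(n) → 0` as `n → +∞`. -/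
theorem rajchman_theorem (μ : ComplexMeasure Circle2)
    (h : Tendsto (cmFourierCoeff μ) Filter.atBot (nhds 0)) :
    Tendsto (cmFourierCoeff μ) Filter.atTop (nhds 0) := by
  rw [cmFourierCoeff_eq_fourierMoment] at h ⊢
  have hmoment :
      Tendsto (fourierMoment (cmVariation μ) (μ.rnDeriv (cmVariation μ))) atBot (𝓝 0) := by
    simpa [← mul_assoc] using h.const_mul 2
  simpa only [mul_zero] using (tendsto_fourierMoment_atTop_of_atBot
    (ComplexMeasure.integrable_rnDeriv μ _) hmoment).const_mul (1 / 2 : ℂ)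

end
end

section
/- Let δ > 0 and let (N_j)_{j≥1} be a strictly increasing sequence of positive integers. If a closed set E ⊆ 𝕋 satisfies E ⊆ A(N_j, δ) for every j, then E is a parisian set. -/
open MeasureTheory Filter Metric Set

noncomputable section

/-!
If `supp μ̂` is a Rajchman set then, as `μ̂` vanishes off its support, `μ̂(n) → 0` as `|n| → ∞`.
On `A(N, δ)` the character `e^{iπNx}` lies within `π N^{-δ}` of `1`, so for `μ` concentrated on
`E` we get `|μ̂(n + N_j) - μ̂(n)| ≤ π N_j^{-δ} ‖μ‖ → 0`. Letting `j → ∞` gives `μ̂(n) = 0` for every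
`n`, hence `μ = 0` because trigonometric polynomials are dense in `C(𝕋)`. Thus the only measure on
`E` with Rajchman spectrum is `0`, which is absolutely continuous.
-/

open Real Topology
open scoped BoundedContinuousFunction

theorem MeasureTheory.SignedMeasure.eq_zero_of_integral_posPart_eq_integral_negPart
    {X : Type*} [MeasurableSpace X] [TopologicalSpace X] [HasOuterApproxClosed X] [BorelSpace X]
    (s : SignedMeasure X)
    (h : ∀ f : X →ᵇ ℝ, ∫ x, f x ∂s.toJordanDecomposition.posPart =
      ∫ x, f x ∂s.toJordanDecomposition.negPart) : s = 0 := by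
  rw [← s.toSignedMeasure_toJordanDecomposition, JordanDecomposition.toSignedMeasure]
  simp only [ext_of_forall_integral_eq_of_IsFiniteMeasure h, sub_self]

theorem ContinuousMap.integrable_of_compactSpace {X E : Type*} [TopologicalSpace X]
    [CompactSpace X] [MeasurableSpace X] [OpensMeasurableSpace X] [NormedAddCommGroup E]
    (ν : Measure X) [IsFiniteMeasure ν] (f : C(X, E)) : Integrable f ν :=
  f.continuous.integrable_of_hasCompactSupport (HasCompactSupport.of_compactSpace _)

section ComplexMeasure

variable (μ : ComplexMeasure Circle2)

instance : IsFiniteMeasure (cmVariation μ) := by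
  unfold cmVariation; infer_instance

theorem norm_cmIntegral_le {f : Circle2 → ℂ} {C : ℝ} (hf : ∀ᵐ x ∂cmVariation μ, ‖f x‖ ≤ C) :
    ‖cmIntegral μ f‖ ≤ C * (cmVariation μ).real univ := by
  set P₁ := μ.re.toJordanDecomposition.posPart
  set N₁ := μ.re.toJordanDecomposition.negPart
  set P₂ := μ.im.toJordanDecomposition.posPart
  set N₂ := μ.im.toJordanDecomposition.negPart
  have hvar : cmVariation μ = (P₁ + N₁) + (P₂ + N₂) := rfl
  have bound : ∀ ν ≤ cmVariation μ, [IsFiniteMeasure ν] → ‖∫ x, f x ∂ν‖ ≤ C * ν.real univ :=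
    fun ν hν _ ↦ norm_integral_le_of_norm_le_const (ae_mono hν hf)
  have h₁ := bound P₁ (by rw [hvar]; exact Measure.le_add_right (Measure.le_add_right le_rfl))
  have h₂ := bound N₁ (by rw [hvar]; exact Measure.le_add_right (Measure.le_add_left le_rfl))
  have h₃ := bound P₂ (by rw [hvar]; exact Measure.le_add_left (Measure.le_add_right le_rfl))
  have h₄ := bound N₂ (by rw [hvar]; exact Measure.le_add_left (Measure.le_add_left le_rfl))
  calc ‖cmIntegral μ f‖
      ≤ ‖∫ x, f x ∂P₁‖ + ‖∫ x, f x ∂N₁‖ + (‖∫ x, f x ∂P₂‖ + ‖∫ x, f x ∂N₂‖) := by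
        refine (norm_add_le _ _).trans (add_le_add (norm_sub_le _ _) ?_)
        rw [norm_mul, Complex.norm_I, one_mul]
        exact norm_sub_le _ _
    _ ≤ C * (cmVariation μ).real univ := by
        rw [hvar, measureReal_add_apply, measureReal_add_apply, measureReal_add_apply]
        linarith

def cmIntegralCLM : C(Circle2, ℂ) →L[ℂ] ℂ :=
  LinearMap.mkContinuous
    { toFun f := cmIntegral μ f
      map_add' f g := by
        simp only [cmIntegral, ContinuousMap.coe_add, Pi.add_apply,
          integral_add (ContinuousMap.integrable_of_compactSpace _ f)
            (ContinuousMap.integrable_of_compactSpace _ g)]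
        ring
      map_smul' c f := by
        simp only [cmIntegral, ContinuousMap.coe_smul, Pi.smul_apply, smul_eq_mul,
          RingHom.id_apply, integral_const_mul]
        ring }
    ((cmVariation μ).real univ) fun f ↦
      (norm_cmIntegral_le μ (ae_of_all _ f.norm_coe_le_norm)).trans_eq (mul_comm _ _)

theorem cmIntegralCLM_apply (f : C(Circle2, ℂ)) : cmIntegralCLM μ f = cmIntegral μ f := rfl

theorem cmIntegral_ofReal (g : Circle2 → ℝ) :
    cmIntegral μ (fun x ↦ (g x : ℂ)) =
      ((∫ x, g x ∂μ.re.toJordanDecomposition.posPart -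
        ∫ x, g x ∂μ.re.toJordanDecomposition.negPart : ℝ) : ℂ) +
      Complex.I * ((∫ x, g x ∂μ.im.toJordanDecomposition.posPart -
        ∫ x, g x ∂μ.im.toJordanDecomposition.negPart : ℝ) : ℂ) := by
  simp only [cmIntegral, integral_complex_ofReal, Complex.ofReal_sub]

theorem eq_zero_of_cmIntegral_fourier_eq_zero (h : ∀ n : ℤ, cmIntegral μ (fourier n) = 0) :
    μ = 0 := by
  have hdense : Dense (Submodule.span ℂ (range (fourier (T := 2))) : Set C(Circle2, ℂ)) :=
    Submodule.dense_iff_topologicalClosure_eq_top.2 span_fourier_closure_eq_top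
  have hzero : cmIntegralCLM μ = 0 :=
    ContinuousLinearMap.ext_on hdense fun _ ⟨n, hn⟩ ↦ hn ▸ h n
  have hreal (g : Circle2 →ᵇ ℝ) : cmIntegral μ (fun x ↦ (g x : ℂ)) = 0 :=
    congr($hzero ⟨fun x ↦ (g x : ℂ), by fun_prop⟩)
  have hre : μ.re = 0 := SignedMeasure.eq_zero_of_integral_posPart_eq_integral_negPart _ fun g ↦ by
    have := congr(Complex.re $(hreal g))
    simp only [cmIntegral_ofReal, Complex.add_re, Complex.ofReal_re, Complex.re_mul_ofReal,
      Complex.I_re, zero_mul, add_zero, Complex.zero_re] at this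
    linarith
  have him : μ.im = 0 := SignedMeasure.eq_zero_of_integral_posPart_eq_integral_negPart _ fun g ↦ by
    have := congr(Complex.im $(hreal g))
    simp only [cmIntegral_ofReal, Complex.add_im, Complex.ofReal_im, Complex.im_mul_ofReal,
      Complex.I_im, one_mul, zero_add, Complex.zero_im] at this
    linarith
  exact ComplexMeasure.equivSignedMeasure.injective <|
    Prod.ext (hre.trans (map_zero _).symm) (him.trans (map_zero _).symm)

theorem norm_cmFourierCoeff_add_sub_le {E : Set Circle2} (hμE : ConcentratedOn μ E) {m : ℤ}
    {ε : ℝ} (hm : ∀ x ∈ E, ‖fourier m x - 1‖ ≤ ε) (n : ℤ) :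
    ‖cmFourierCoeff μ (n + m) - cmFourierCoeff μ n‖ ≤ ε * (cmVariation μ).real univ / 2 := by
  have hsub : cmFourierCoeff μ (n + m) - cmFourierCoeff μ n =
      1 / 2 * cmIntegralCLM μ (fourier (n + m) - fourier n) := by
    rw [map_sub, mul_sub]
    rfl
  have hbound : ∀ᵐ x ∂cmVariation μ, ‖(fourier (n + m) - fourier n : C(Circle2, ℂ)) x‖ ≤ ε := by
    filter_upwards [mem_ae_iff.2 hμE] with x hx
    have hunit : ‖fourier n x‖ = 1 := Circle.norm_coe _
    rw [ContinuousMap.sub_apply, fourier_add, ← mul_sub_one, norm_mul, hunit, one_mul]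
    exact hm x hx
  have hhalf : ‖(1 / 2 : ℂ)‖ = 1 / 2 := by norm_num
  rw [hsub, norm_mul, hhalf, cmIntegralCLM_apply]
  linarith [norm_cmIntegral_le μ hbound]

theorem tendsto_cmFourierCoeff_cofinite_of_isRajchman (h : IsRajchman (fourierSupport μ)) :
    Tendsto (cmFourierCoeff μ) cofinite (𝓝 0) := by
  have hoff : Tendsto (cmFourierCoeff μ) (cofinite ⊓ 𝓟 (fourierSupport μ)ᶜ) (𝓝 0) :=
    tendsto_const_nhds.congr' <| eventually_inf_principal.2 <|
      .of_forall fun _ hn ↦ (not_not.1 hn).symm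
  rw [← inf_top_eq cofinite, ← principal_univ, ← union_compl_self (fourierSupport μ),
    ← sup_principal, inf_sup_left]
  exact (h μ hoff).sup hoff

theorem eq_zero_of_tendsto_cmFourierCoeff {E : Set Circle2} (hμE : ConcentratedOn μ E)
    (hdecay : Tendsto (cmFourierCoeff μ) cofinite (𝓝 0)) {ι : Type*} {l : Filter ι} [l.NeBot]
    {m : ι → ℤ} {ε : ι → ℝ} (hm : Tendsto m l cofinite) (hε : Tendsto ε l (𝓝 0))
    (hclose : ∀ᶠ i in l, ∀ x ∈ E, ‖fourier (m i) x - 1‖ ≤ ε i) : μ = 0 := by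
  refine eq_zero_of_cmIntegral_fourier_eq_zero μ fun n ↦ ?_
  suffices cmFourierCoeff μ n = 0 from (mul_eq_zero.1 this).resolve_left (by norm_num)
  have hfar : Tendsto (fun i ↦ cmFourierCoeff μ (n + m i)) l (𝓝 0) :=
    hdecay.comp ((add_right_injective n).tendsto_cofinite.comp hm)
  have hnear : Tendsto (fun i ↦ cmFourierCoeff μ (n + m i) - cmFourierCoeff μ n) l (𝓝 0) := by
    refine squeeze_zero_norm' (hclose.mono fun i hi ↦ norm_cmFourierCoeff_add_sub_le μ hμE hi n) ?_
    simpa using (hε.mul_const ((cmVariation μ).real univ)).div_const 2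
  simpa using hfar.sub hnear

end ComplexMeasure

theorem fourier_apply_add {T : ℝ} (n : ℤ) (x y : AddCircle T) :
    fourier n (x + y) = fourier n x * fourier n y := by
  simp only [fourier_apply, smul_add, AddCircle.toCircle_add, Circle.coe_mul]

theorem norm_fourier_coe_sub_one_le {T : ℝ} (n : ℤ) (a : ℝ) :
    ‖fourier n (a : AddCircle T) - 1‖ ≤ |2 * π * n * a / T| := by
  rw [fourier_coe_apply, show 2 * (π : ℂ) * Complex.I * n * a / T =
    Complex.I * ((2 * π * n * a / T : ℝ) : ℂ) by push_cast; ring]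
  exact Real.norm_exp_I_mul_ofReal_sub_one_le

theorem fourier_natCast_eq_one_of_mem_grid {N : ℕ} (hN : 0 < N) {y : Circle2}
    (hy : y ∈ grid N) : fourier (N : ℤ) y = 1 := by
  obtain ⟨k, rfl⟩ := hy
  rw [fourier_coe_apply]
  convert Complex.exp_int_mul_two_pi_mul_I k using 2
  have : (N : ℂ) ≠ 0 := by exact_mod_cast hN.ne'
  push_cast
  field_simp

theorem norm_fourier_sub_one_le_of_mem_nbhdGrid {N : ℕ} (hN : 0 < N) {δ : ℝ} {x : Circle2}
    (hx : x ∈ nbhdGrid N δ) : ‖fourier (N : ℤ) x - 1‖ ≤ π / (N : ℝ) ^ δ := by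
  have hN' : (0 : ℝ) < N := Nat.cast_pos.2 hN
  have hpow : (N : ℝ) ^ (1 + δ) = N * N ^ δ := by rw [rpow_add hN', rpow_one]
  -- The slack factor `2` in the radius of `A(N, δ)` yields a grid point `y` and a real lift `a`
  -- of `x - y` with `|a| < N^{-1-δ}`.
  have hr : infDist x (grid N) < 1 / (N : ℝ) ^ (1 + δ) := by
    have : 0 < (N : ℝ) ^ (1 + δ) := rpow_pos_of_pos hN' _
    exact hx.trans_lt <| one_div_lt_one_div_of_lt this (by linarith)
  obtain ⟨y, hy, hxy⟩ := (infDist_lt_iff (⟨_, 0, rfl⟩ : (grid N).Nonempty)).1 hr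
  rw [dist_eq_norm] at hxy
  obtain ⟨a, ha, ha_lt⟩ := QuotientAddGroup.norm_lt_iff.1 hxy
  have hshift : fourier (N : ℤ) x = fourier (N : ℤ) (a : Circle2) := by
    rw [ha, ← mul_one (fourier _ (x - y)), ← fourier_natCast_eq_one_of_mem_grid hN hy,
      ← fourier_apply_add, sub_add_cancel]
  calc ‖fourier (N : ℤ) x - 1‖ ≤ |2 * π * ((N : ℤ) : ℝ) * a / 2| :=
        hshift ▸ norm_fourier_coe_sub_one_le _ _
    _ = π * N * ‖a‖ := by
        have : 0 < 2 * π * ((N : ℤ) : ℝ) := by positivity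
        rw [Real.norm_eq_abs, abs_div, abs_mul, abs_of_pos this]
        push_cast; ring
    _ ≤ π * N * (1 / (N : ℝ) ^ (1 + δ)) := by gcongr
    _ = π / (N : ℝ) ^ δ := by rw [hpow]; field_simp

theorem isParisian_of_subset_nbhdGrid_general (δ : ℝ) (hδ : 0 < δ) (N : ℕ → ℕ)
    (hmono : StrictMono N) (E : Set Circle2)
    (hsub : ∀ j, E ⊆ nbhdGrid (N j) δ) : IsParisian E := by
  intro μ hμE hnot_ac hraj
  have hμ : μ = 0 := by
    refine eq_zero_of_tendsto_cmFourierCoeff μ hμE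
      (tendsto_cmFourierCoeff_cofinite_of_isRajchman μ hraj) (l := atTop)
      (m := fun j ↦ (N j : ℤ)) (ε := fun j ↦ π / (N j : ℝ) ^ δ) ?_ ?_ ?_
    · rw [← Nat.cofinite_eq_atTop]
      exact (Nat.cast_injective.comp hmono.injective).tendsto_cofinite
    · exact tendsto_const_nhds.div_atTop <| (tendsto_rpow_atTop hδ).comp <|
        tendsto_natCast_atTop_atTop.comp hmono.tendsto_atTop
    · filter_upwards [hmono.tendsto_atTop.eventually_gt_atTop 0] with j hj x hx
      exact norm_fourier_sub_one_le_of_mem_nbhdGrid hj (hsub j hx)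
  exact hnot_ac (hμ ▸ VectorMeasure.AbsolutelyContinuous.zero _)

/-- If a closed set `E ⊆ 𝕋` satisfies `E ⊆ A(N_j, δ)` for all `j`, for some `δ > 0` and
strictly increasing sequence of positive integers `(N_j)`, then `E` is parisian. -/
theorem isParisian_of_subset_nbhdGrid (δ : ℝ) (hδ : 0 < δ) (N : ℕ → ℕ)
    (hmono : StrictMono N) (hpos : ∀ j, 0 < N j) (E : Set Circle2) (hE : IsClosed E)
    (hsub : ∀ j, E ⊆ nbhdGrid (N j) δ) : IsParisian E :=
  isParisian_of_subset_nbhdGrid_general δ hδ N hmono E hsub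

end
end

section
/- For every α ∈ (0,1), setting δ = 1 − α, there exist a strictly increasing sequence (N_j)_{j≥1} of positive integers and a closed set E ⊆ 𝕋 with E ⊆ A(N_j, δ) for every j, such that for every s ∈ (0, α) there exist a constant c_s > 0 and a probability measure μ on 𝕋 concentrated on E satisfying μ(I) ≤ c_s·|I|^s for every arc (interval) I ⊆ 𝕋 of length |I|. -/
open MeasureTheory Filter Metric Set

noncomputable section

/-!
Write `x ∈ [0, 1)` in base 4 and set to zero its digits in the blocks `[m_j, p_j)`, where
`p_j ≈ (2 - α) m_j`; call the result `y`. Up to `4^{-p_j}`, `y` is a multiple of `4^{-m_j}`, so `2y`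
lies in `A(4^{m_j}, 1 - α)` for every `j`. Let `E` be the intersection of these closed sets and `μ`
the image of Lebesgue measure on `[0, 1)` under `x ↦ 2y`. The blocks are sparse enough that at
least `α n - 1` of the first `n` digits stay free. Free digits are read off from `y`, so an
interval of length `4^{-n}` pulls back to at most `3 · 4^{n - (α n - 1)}` base-4 cells of
length `4^{-n}`. Hence `μ(I) ≲ |I|^α`, and any `s < α` costs only a constant.
-/

section DigitDeletion

open scoped Finset Topology
open Real (ofDigits ofDigitsTerm digits)

variable {b : ℕ} [NeZero b] {S : Set ℕ}

/-- The value of `0.c₀c₁…c_{n-1}` in base `b` with the digits outside `S` replaced by `0`,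
where `c = c₀c₁…c_{n-1}` is read as an `n`-digit numeral. -/
def keepDigitsNumeral (b : ℕ) (S : Set ℕ) : ℕ → ℕ → ℝ
  | 0, _ => 0
  | n + 1, c => keepDigitsNumeral b S n (c / b) +
      S.indicator (fun i => ((c % b : ℕ) : ℝ) * ((b : ℝ) ^ (i + 1))⁻¹) n

lemma exists_keepDigitsNumeral_eq (n c : ℕ) :
    ∃ K : ℕ, keepDigitsNumeral b S n c = K * ((b : ℝ) ^ n)⁻¹ := by
  induction n generalizing c with
  | zero => exact ⟨0, by simp [keepDigitsNumeral]⟩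
  | succ n ih =>
    obtain ⟨K, hK⟩ := ih (c / b)
    have hb : (b : ℝ) ≠ 0 := NeZero.ne _
    by_cases hn : n ∈ S
    · refine ⟨b * K + c % b, ?_⟩
      rw [keepDigitsNumeral, hK, Set.indicator_of_mem hn]
      field_simp
      push_cast
      ring
    · refine ⟨b * K, ?_⟩
      rw [keepDigitsNumeral, hK, Set.indicator_of_notMem hn]
      field_simp
      push_cast
      ring

lemma mod_eq_and_keepDigitsNumeral_eq_of_succ_eq {n c c' : ℕ} (hn : n ∈ S)
    (h : keepDigitsNumeral b S (n + 1) c = keepDigitsNumeral b S (n + 1) c') :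
    c % b = c' % b ∧ keepDigitsNumeral b S n (c / b) = keepDigitsNumeral b S n (c' / b) := by
  obtain ⟨K, hK⟩ := exists_keepDigitsNumeral_eq (b := b) (S := S) n (c / b)
  obtain ⟨K', hK'⟩ := exists_keepDigitsNumeral_eq (b := b) (S := S) n (c' / b)
  have hb : 0 < b := Nat.pos_of_neZero b
  have hnat : b * K + c % b = b * K' + c' % b := by
    simp only [keepDigitsNumeral, Set.indicator_of_mem hn, hK, hK'] at h
    have hb' : (b : ℝ) ≠ 0 := NeZero.ne _
    field_simp at h
    have h' : (b : ℝ) ^ n * ((b * K + c % b : ℕ) : ℝ) =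
        (b : ℝ) ^ n * ((b * K' + c' % b : ℕ) : ℝ) := by
      push_cast
      linear_combination h
    exact Nat.cast_injective (mul_left_cancel₀ (pow_ne_zero n hb') h')
  have hmod : c % b = c' % b := by
    simpa [Nat.mul_add_mod, Nat.mod_mod] using congrArg (· % b) hnat
  have hK_eq : K = K' := by
    simpa [Nat.mul_add_div hb, Nat.div_eq_of_lt (Nat.mod_lt _ hb)] using congrArg (· / b) hnat
  exact ⟨hmod, by rw [hK, hK', hK_eq]⟩

lemma card_keepDigitsNumeral_fiber_le [DecidablePred (· ∈ S)] (n : ℕ) (v : ℝ) :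
    #{c ∈ Finset.range (b ^ n) | keepDigitsNumeral b S n c = v} ≤
      b ^ (n - Nat.count (· ∈ S) n) := by
  have hb : 0 < b := Nat.pos_of_neZero b
  induction n generalizing v with
  | zero => exact (Finset.card_filter_le _ _).trans (by simp)
  | succ n ih =>
    set A := {c ∈ Finset.range (b ^ (n + 1)) | keepDigitsNumeral b S (n + 1) c = v}
    have hdiv : ∀ c ∈ A, c / b ∈ Finset.range (b ^ n) := fun c hc => by
      have := (Finset.mem_range.1 (Finset.mem_filter.1 hc).1)
      rw [Finset.mem_range, Nat.div_lt_iff_lt_mul hb, ← pow_succ]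
      exact this
    have hcount := Nat.count_le (· ∈ S) (n := n)
    by_cases hn : n ∈ S
    · rw [Nat.count_succ, if_pos hn, show n + 1 - (Nat.count (· ∈ S) n + 1) =
        n - Nat.count (· ∈ S) n by omega]
      obtain hA | ⟨c₀, hc₀⟩ := A.eq_empty_or_nonempty
      · simp [hA]
      have hsame : ∀ c ∈ A, c % b = c₀ % b ∧
          keepDigitsNumeral b S n (c / b) = keepDigitsNumeral b S n (c₀ / b) := fun c hc =>
        mod_eq_and_keepDigitsNumeral_eq_of_succ_eq hn
          ((Finset.mem_filter.1 hc).2.trans (Finset.mem_filter.1 hc₀).2.symm)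
      refine le_trans ?_ (ih (keepDigitsNumeral b S n (c₀ / b)))
      refine Finset.card_le_card_of_injOn (· / b)
        (fun c hc => Finset.mem_filter.2 ⟨hdiv c hc, (hsame c hc).2⟩) ?_
      intro c hc c' hc' hcc'
      rw [← Nat.div_add_mod c b, ← Nat.div_add_mod c' b, (hsame c hc).1, (hsame c' hc').1]
      exact congrArg (b * · + c₀ % b) hcc'
    · rw [Nat.count_succ, if_neg hn, show n + 1 - (Nat.count (· ∈ S) n + 0) =
        n - Nat.count (· ∈ S) n + 1 by omega, pow_succ, mul_comm]
      refine (Finset.card_le_mul_card_image (f := (· / b)) A b fun q _ => ?_).trans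
        (Nat.mul_le_mul_left b ((Finset.card_le_card fun q hq => ?_).trans (ih v)))
      · refine (Finset.card_le_card_of_injOn (· % b) (t := Finset.range b)
          (fun c _ => Finset.mem_range.2 (Nat.mod_lt c hb)) ?_).trans (by simp)
        intro c hc c' hc' hcc'
        rw [← Nat.div_add_mod c b, ← Nat.div_add_mod c' b,
          (Finset.mem_filter.1 hc).2, (Finset.mem_filter.1 hc').2]
        exact congrArg (b * q + ·) hcc'
      · obtain ⟨c, hc, rfl⟩ := Finset.mem_image.1 hq
        refine Finset.mem_filter.2 ⟨hdiv c hc, ?_⟩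
        have := (Finset.mem_filter.1 hc).2
        rwa [keepDigitsNumeral, Set.indicator_of_notMem hn, add_zero] at this

def keepDigits (b : ℕ) [NeZero b] (S : Set ℕ) (x : ℝ) : ℝ :=
  ofDigits (S.indicator (digits x b))

lemma floor_mul_pow_succ_eq (i : ℕ) (x : ℝ) :
    ⌊x * b ^ (i + 1)⌋₊ = b * ⌊x * b ^ i⌋₊ + digits x b i := by
  have hdiv : ⌊x * b ^ (i + 1)⌋₊ / b = ⌊x * b ^ i⌋₊ := by
    rw [← Nat.floor_div_natCast, pow_succ, ← mul_assoc, mul_div_cancel_right₀ _ (NeZero.ne _)]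
  rw [Real.digits, Fin.val_ofNat, ← hdiv, Nat.div_add_mod]

lemma sum_ofDigitsTerm_indicator_digits_eq (n : ℕ) (x : ℝ) :
    ∑ i ∈ Finset.range n, ofDigitsTerm (S.indicator (digits x b)) i =
      keepDigitsNumeral b S n ⌊x * b ^ n⌋₊ := by
  induction n with
  | zero => simp [keepDigitsNumeral]
  | succ n ih =>
    have hd : (digits x b n : ℕ) < b := (digits x b n).isLt
    have hb : 0 < b := Nat.pos_of_neZero b
    rw [Finset.sum_range_succ, ih, keepDigitsNumeral, floor_mul_pow_succ_eq, Nat.mul_add_div hb,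
      Nat.div_eq_of_lt hd, add_zero, Nat.mul_add_mod, Nat.mod_eq_of_lt hd]
    by_cases hn : n ∈ S <;> simp [ofDigitsTerm, hn]

lemma keepDigits_mem_Icc_keepDigitsNumeral (n : ℕ) (x : ℝ) :
    keepDigits b S x ∈ Set.Icc (keepDigitsNumeral b S n ⌊x * b ^ n⌋₊)
      (keepDigitsNumeral b S n ⌊x * b ^ n⌋₊ + ((b : ℝ) ^ n)⁻¹) := by
  rw [keepDigits, Real.ofDigits_eq_sum_add_ofDigits _ n, sum_ofDigitsTerm_indicator_digits_eq]
  have h0 := Real.ofDigits_nonneg fun i => S.indicator (digits x b) (i + n)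
  have h1 := Real.ofDigits_le_one fun i => S.indicator (digits x b) (i + n)
  have hq : (0 : ℝ) ≤ ((b : ℝ) ^ n)⁻¹ := by positivity
  constructor <;> nlinarith

lemma exists_keepDigits_mem_Icc_of_disjoint {m p : ℕ} (hmp : m ≤ p)
    (hS : Disjoint S (Set.Ico m p)) (x : ℝ) :
    ∃ K : ℕ, keepDigits b S x ∈
      Set.Icc (K * ((b : ℝ) ^ m)⁻¹) (K * ((b : ℝ) ^ m)⁻¹ + ((b : ℝ) ^ p)⁻¹) := by
  obtain ⟨K, hK⟩ := exists_keepDigitsNumeral_eq (b := b) (S := S) m ⌊x * b ^ m⌋₊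
  have hsum : ∑ i ∈ Finset.range p, ofDigitsTerm (S.indicator (digits x b)) i =
      ∑ i ∈ Finset.range m, ofDigitsTerm (S.indicator (digits x b)) i := by
    rw [← Finset.sum_range_add_sum_Ico _ hmp, add_eq_left]
    refine Finset.sum_eq_zero fun i hi => ?_
    have hi : i ∉ S := hS.notMem_of_mem_right (by simpa using hi)
    simp [ofDigitsTerm, hi]
  refine ⟨K, ?_⟩
  rw [← hK, ← sum_ofDigitsTerm_indicator_digits_eq, ← hsum, sum_ofDigitsTerm_indicator_digits_eq]
  exact keepDigits_mem_Icc_keepDigitsNumeral p x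

lemma measurable_keepDigits : Measurable (keepDigits b S) := by
  refine Real.continuous_ofDigits.measurable.comp (measurable_pi_lambda _ fun i => ?_)
  by_cases hi : i ∈ S
  · simp only [Set.indicator_of_mem hi, Real.digits]
    exact (measurable_from_nat (f := Fin.ofNat b)).comp
      (Nat.measurable_floor.comp (measurable_id.mul_const ((b : ℝ) ^ (i + 1))))
  · simp only [Set.indicator_of_notMem hi]
    exact measurable_const

lemma volume_keepDigitsNumeral_floor_eq_le [DecidablePred (· ∈ S)] (n : ℕ) (v : ℝ) :
    volume {x ∈ Set.Ico (0 : ℝ) 1 | keepDigitsNumeral b S n ⌊x * b ^ n⌋₊ = v} ≤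
      ENNReal.ofReal ((b : ℝ) ^ Nat.count (· ∈ S) n)⁻¹ := by
  set H := {c ∈ Finset.range (b ^ n) | keepDigitsNumeral b S n c = v}
  have hbn : (0 : ℝ) < (b : ℝ) ^ n := pow_pos (Nat.cast_pos.2 (Nat.pos_of_neZero b)) n
  have hcover : {x ∈ Set.Ico (0 : ℝ) 1 | keepDigitsNumeral b S n ⌊x * b ^ n⌋₊ = v} ⊆
      ⋃ c ∈ H, Set.Ico ((c : ℝ) / b ^ n) ((c + 1) / b ^ n) := by
    rintro x ⟨⟨hx0, hx1⟩, hxv⟩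
    have hlt : ⌊x * b ^ n⌋₊ < b ^ n :=
      (Nat.floor_lt (mul_nonneg hx0 hbn.le)).2 (by push_cast; nlinarith)
    refine Set.mem_biUnion (Finset.mem_filter.2 ⟨Finset.mem_range.2 hlt, hxv⟩) ⟨?_, ?_⟩
    · rw [div_le_iff₀ hbn]
      exact Nat.floor_le (by positivity)
    · rw [lt_div_iff₀ hbn]
      exact Nat.lt_floor_add_one _
  calc _ ≤ ∑ c ∈ H, volume (Set.Ico ((c : ℝ) / b ^ n) ((c + 1) / b ^ n)) :=
        (measure_mono hcover).trans (measure_biUnion_finset_le _ _)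
    _ = #H * ENNReal.ofReal ((b : ℝ) ^ n)⁻¹ := by
        rw [← nsmul_eq_mul, ← Finset.sum_const]
        refine Finset.sum_congr rfl fun c _ => ?_
        rw [Real.volume_Ico]
        congr 1
        field_simp
        ring
    _ ≤ (b ^ (n - Nat.count (· ∈ S) n) : ℕ) * ENNReal.ofReal ((b : ℝ) ^ n)⁻¹ := by
        gcongr
        exact card_keepDigitsNumeral_fiber_le n v
    _ = ENNReal.ofReal ((b : ℝ) ^ Nat.count (· ∈ S) n)⁻¹ := by
        rw [← ENNReal.ofReal_natCast, ← ENNReal.ofReal_mul (by positivity)]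
        congr 1
        have hcount := Nat.count_le (· ∈ S) (n := n)
        have hb : (b : ℝ) ≠ 0 := NeZero.ne _
        rw [show (b : ℝ) ^ n = b ^ (n - Nat.count (· ∈ S) n) * b ^ Nat.count (· ∈ S) n by
          rw [← pow_add, Nat.sub_add_cancel hcount]]
        push_cast
        field_simp

lemma volume_keepDigits_mem_Icc_le [DecidablePred (· ∈ S)] {n : ℕ} {u v : ℝ}
    (huv : v ≤ u + ((b : ℝ) ^ n)⁻¹) :
    volume {x ∈ Set.Ico (0 : ℝ) 1 | keepDigits b S x ∈ Set.Icc u v} ≤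
      3 * ENNReal.ofReal ((b : ℝ) ^ Nat.count (· ∈ S) n)⁻¹ := by
  have hbn : (0 : ℝ) < (b : ℝ) ^ n := pow_pos (Nat.cast_pos.2 (Nat.pos_of_neZero b)) n
  set K₀ : ℤ := ⌈u * b ^ n - 1⌉
  -- the truncation `K / bⁿ` of `keepDigits` lies in `[u - b⁻ⁿ, u + b⁻ⁿ]`, so `K` takes ≤ 3 values
  have hcover : {x ∈ Set.Ico (0 : ℝ) 1 | keepDigits b S x ∈ Set.Icc u v} ⊆
      ⋃ k ∈ Finset.Icc K₀ (K₀ + 2), {x ∈ Set.Ico (0 : ℝ) 1 |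
        keepDigitsNumeral b S n ⌊x * b ^ n⌋₊ = k * ((b : ℝ) ^ n)⁻¹} := by
    rintro x ⟨hx, hxu, hxv⟩
    obtain ⟨K, hK⟩ := exists_keepDigitsNumeral_eq (b := b) (S := S) n ⌊x * b ^ n⌋₊
    obtain ⟨hlow, hhigh⟩ := keepDigits_mem_Icc_keepDigitsNumeral (b := b) (S := S) n x
    rw [hK] at hlow hhigh
    have hlowK : u * b ^ n - 1 ≤ K := by
      have := mul_le_mul_of_nonneg_right (hxu.trans hhigh) hbn.le
      field_simp at this
      linarith
    have hhighK : (K : ℝ) ≤ u * b ^ n + 1 := by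
      have := mul_le_mul_of_nonneg_right ((hlow.trans hxv).trans huv) hbn.le
      field_simp at this
      linarith
    have hK₀ : u * b ^ n - 1 ≤ K₀ := Int.le_ceil _
    refine Set.mem_biUnion (x := (K : ℤ)) (Finset.mem_Icc.2 ⟨Int.ceil_le.2 (by simpa using hlowK),
      ?_⟩) ⟨hx, by simpa using hK⟩
    exact_mod_cast (by linarith : (K : ℝ) ≤ K₀ + 2)
  calc _ ≤ ∑ k ∈ Finset.Icc K₀ (K₀ + 2), volume {x ∈ Set.Ico (0 : ℝ) 1 |
        keepDigitsNumeral b S n ⌊x * b ^ n⌋₊ = k * ((b : ℝ) ^ n)⁻¹} :=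
        (measure_mono hcover).trans (measure_biUnion_finset_le _ _)
    _ ≤ ∑ _k ∈ Finset.Icc K₀ (K₀ + 2), ENNReal.ofReal ((b : ℝ) ^ Nat.count (· ∈ S) n)⁻¹ :=
        Finset.sum_le_sum fun k _ => volume_keepDigitsNumeral_floor_eq_le n _
    _ = 3 * ENNReal.ofReal ((b : ℝ) ^ Nat.count (· ∈ S) n)⁻¹ := by
        rw [Finset.sum_const, Int.card_Icc, show K₀ + 2 + 1 - K₀ = 3 by ring, nsmul_eq_mul]
        rfl

lemma volume_keepDigits_mem_Icc_le_rpow_of_lt [DecidablePred (· ∈ S)] (hb : 1 < b)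
    {α C : ℝ} (hα : 0 < α) (hS : ∀ n : ℕ, α * n - C ≤ Nat.count (· ∈ S) n)
    {u v : ℝ} (huv : u < v) (hvu : v ≤ u + 1) :
    volume {x ∈ Set.Ico (0 : ℝ) 1 | keepDigits b S x ∈ Set.Icc u v} ≤
      ENNReal.ofReal (3 * (b : ℝ) ^ (C + α) * (v - u) ^ α) := by
  have hb₀ : (0 : ℝ) < b := by positivity
  have hb₁ : (1 : ℝ) < b := by exact_mod_cast hb
  have hpos : 0 < v - u := sub_pos.2 huv
  obtain ⟨n, hn, hn'⟩ := exists_nat_pow_near (one_le_inv_iff₀.2 ⟨hpos, by linarith⟩) hb₁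
  have hle : v ≤ u + ((b : ℝ) ^ n)⁻¹ := by
    have := (le_inv_comm₀ hpos (pow_pos hb₀ n)).2 hn
    linarith
  have hlt : ((b : ℝ) ^ n)⁻¹ ≤ b * (v - u) := by
    rw [pow_succ, inv_lt_iff_one_lt_mul₀ hpos] at hn'
    rw [inv_le_iff_one_le_mul₀ (by positivity)]
    nlinarith
  refine (volume_keepDigits_mem_Icc_le hle).trans ?_
  rw [← ENNReal.ofReal_ofNat 3, ← ENNReal.ofReal_mul (by norm_num), mul_assoc]
  refine ENNReal.ofReal_le_ofReal (mul_le_mul_of_nonneg_left ?_ (by norm_num))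
  calc ((b : ℝ) ^ Nat.count (· ∈ S) n)⁻¹ = (b : ℝ) ^ (-(Nat.count (· ∈ S) n : ℝ)) := by
        rw [Real.rpow_neg hb₀.le, Real.rpow_natCast]
    _ ≤ (b : ℝ) ^ (C - α * n) :=
        Real.rpow_le_rpow_of_exponent_le hb₁.le (by linarith [hS n])
    _ = (b : ℝ) ^ C * (((b : ℝ) ^ n)⁻¹) ^ α := by
        rw [sub_eq_add_neg, Real.rpow_add hb₀, Real.inv_rpow (by positivity), ← Real.rpow_natCast,
          ← Real.rpow_mul hb₀.le, ← Real.rpow_neg hb₀.le, mul_comm (n : ℝ)]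
    _ ≤ (b : ℝ) ^ C * (b * (v - u)) ^ α := by gcongr
    _ = (b : ℝ) ^ (C + α) * (v - u) ^ α := by
        rw [Real.mul_rpow hb₀.le hpos.le, Real.rpow_add hb₀, mul_assoc]

lemma volume_keepDigits_mem_Icc_le_rpow [DecidablePred (· ∈ S)] (hb : 1 < b)
    {α C : ℝ} (hα : 0 < α) (hS : ∀ n : ℕ, α * n - C ≤ Nat.count (· ∈ S) n)
    {u v : ℝ} (huv : u ≤ v) (hvu : v ≤ u + 1) :
    volume {x ∈ Set.Ico (0 : ℝ) 1 | keepDigits b S x ∈ Set.Icc u v} ≤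
      ENNReal.ofReal (3 * (b : ℝ) ^ (C + α) * (v - u) ^ α) := by
  obtain huv | rfl := huv.lt_or_eq
  · exact volume_keepDigits_mem_Icc_le_rpow_of_lt hb hα hS huv hvu
  -- a point is covered by arbitrarily short intervals
  set K := 3 * (b : ℝ) ^ (C + α)
  have hlim : Tendsto (fun ε : ℝ => ENNReal.ofReal (K * ε ^ α)) (𝓝[>] 0)
      (𝓝 (ENNReal.ofReal (K * (u - u) ^ α))) := by
    rw [sub_self]
    exact ((ENNReal.continuous_ofReal.tendsto _).comp ((continuousAt_const.mul
      (Real.continuousAt_rpow_const 0 α (Or.inr hα.le))).tendsto)).mono_left nhdsWithin_le_nhds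
  refine ge_of_tendsto hlim ?_
  filter_upwards [Ioc_mem_nhdsGT (zero_lt_one' ℝ)] with ε ⟨hε, hε1⟩
  calc _ ≤ volume {x ∈ Set.Ico (0 : ℝ) 1 | keepDigits b S x ∈ Set.Icc u (u + ε)} :=
        measure_mono fun x hx => ⟨hx.1, hx.2.1, hx.2.2.trans (by linarith)⟩
    _ ≤ ENNReal.ofReal (K * (u + ε - u) ^ α) :=
        volume_keepDigits_mem_Icc_le_rpow_of_lt hb hα hS (by linarith) (by linarith)
    _ = ENNReal.ofReal (K * ε ^ α) := by rw [add_sub_cancel_left]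

end DigitDeletion

section Circle

lemma isClosed_nbhdGrid (N : ℕ) (δ : ℝ) : IsClosed (nbhdGrid N δ) :=
  isClosed_le (continuous_infDist_pt _) continuous_const

lemma coe_mem_nbhdGrid {N : ℕ} {δ y : ℝ} (k : ℤ)
    (h : |y - 2 * k / N| ≤ 1 / (2 * (N : ℝ) ^ ((1 : ℝ) + δ))) :
    (y : Circle2) ∈ nbhdGrid N δ := by
  have hk : ((2 * k / N : ℝ) : Circle2) ∈ grid N := ⟨k, rfl⟩
  refine (infDist_le_dist_of_mem hk).trans (le_trans ?_ h)
  rw [dist_eq_norm, ← AddCircle.coe_sub]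
  exact QuotientAddGroup.norm_mk_le_norm

lemma exists_mem_Icc_of_coe_two_mul_mem_arc {a ℓ y : ℝ} (hℓ : ℓ ≤ 2) (hy : y ∈ Set.Icc 0 1)
    (h : ((2 * y : ℝ) : Circle2) ∈ (fun t : ℝ => (t : Circle2)) '' Set.Icc a (a + ℓ)) :
    ∃ k ∈ Finset.Icc (⌊-a / 2⌋ - 1) (⌊-a / 2⌋ + 1),
      y ∈ Set.Icc (a / 2 + k) (a / 2 + ℓ / 2 + k) := by
  obtain ⟨t, ⟨hat, hta⟩, hty⟩ := h
  obtain ⟨k, hk⟩ := (AddCircle.coe_eq_zero_iff (2 : ℝ)).1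
    (by rw [AddCircle.coe_sub, ← hty, sub_self] : ((2 * y - t : ℝ) : Circle2) = 0)
  rw [zsmul_eq_mul] at hk
  have hfloor := Int.floor_le (-a / 2)
  have hfloor' := Int.lt_floor_add_one (-a / 2)
  refine ⟨k, Finset.mem_Icc.2 ⟨?_, ?_⟩, by constructor <;> linarith⟩
  · exact_mod_cast (by linarith [hy.1] : (⌊-a / 2⌋ - 1 : ℝ) ≤ k)
  · exact Int.lt_add_one_iff.1 (by exact_mod_cast (by linarith [hy.2] : (k : ℝ) < ⌊-a / 2⌋ + 1 + 1))

end Circle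

section DigitMeasure

variable {b : ℕ} [NeZero b] {S : Set ℕ}

def keepDigitsMeasure (b : ℕ) [NeZero b] (S : Set ℕ) : Measure Circle2 :=
  (volume.restrict (Set.Ico (0 : ℝ) 1)).map fun x => ((2 * keepDigits b S x : ℝ) : Circle2)

lemma measurable_coe_two_mul_keepDigits :
    Measurable fun x => ((2 * keepDigits b S x : ℝ) : Circle2) :=
  (AddCircle.continuous_mk' 2).measurable.comp (measurable_keepDigits.const_mul 2)

instance : IsProbabilityMeasure (keepDigitsMeasure b S) :=
  have : IsProbabilityMeasure (volume.restrict (Set.Ico (0 : ℝ) 1)) := ⟨by simp⟩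
  Measure.isProbabilityMeasure_map measurable_coe_two_mul_keepDigits.aemeasurable

lemma keepDigitsMeasure_compl_eq_zero {E : Set Circle2} (hE : MeasurableSet E)
    (h : ∀ x ∈ Set.Ico (0 : ℝ) 1, ((2 * keepDigits b S x : ℝ) : Circle2) ∈ E) :
    keepDigitsMeasure b S Eᶜ = 0 :=
  ae_iff.1 <| (ae_map_iff measurable_coe_two_mul_keepDigits.aemeasurable hE).2 <|
    ae_restrict_of_forall_mem measurableSet_Ico h

lemma keepDigitsMeasure_arc_le [DecidablePred (· ∈ S)] (hb : 1 < b)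
    {α C : ℝ} (hα : 0 < α) (hS : ∀ n : ℕ, α * n - C ≤ Nat.count (· ∈ S) n)
    (a : ℝ) {ℓ : ℝ} (hℓ : 0 ≤ ℓ) (hℓ2 : ℓ ≤ 2) :
    keepDigitsMeasure b S ((fun t : ℝ => (t : Circle2)) '' Set.Icc a (a + ℓ)) ≤
      ENNReal.ofReal (9 * (b : ℝ) ^ (C + α) * ℓ ^ α) := by
  have harc : MeasurableSet ((fun t : ℝ => (t : Circle2)) '' Set.Icc a (a + ℓ)) :=
    (isCompact_Icc.image (AddCircle.continuous_mk' 2)).isClosed.measurableSet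
  set F := ⌊-a / 2⌋
  have hcover : (fun x => ((2 * keepDigits b S x : ℝ) : Circle2)) ⁻¹'
      ((fun t : ℝ => (t : Circle2)) '' Set.Icc a (a + ℓ)) ∩ Set.Ico 0 1 ⊆
      ⋃ k ∈ Finset.Icc (F - 1) (F + 1),
        {x ∈ Set.Ico (0 : ℝ) 1 | keepDigits b S x ∈ Set.Icc (a / 2 + k) (a / 2 + ℓ / 2 + k)} := by
    rintro x ⟨hx, hxI⟩
    have hx01 : keepDigits b S x ∈ Set.Icc 0 1 :=
      ⟨Real.ofDigits_nonneg _, Real.ofDigits_le_one _⟩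
    obtain ⟨k, hk, hxk⟩ := exists_mem_Icc_of_coe_two_mul_mem_arc hℓ2 hx01 hx
    exact Set.mem_biUnion hk ⟨hxI, hxk⟩
  rw [keepDigitsMeasure, Measure.map_apply measurable_coe_two_mul_keepDigits harc,
    Measure.restrict_apply (measurable_coe_two_mul_keepDigits harc)]
  calc _ ≤ ∑ k ∈ Finset.Icc (F - 1) (F + 1), volume {x ∈ Set.Ico (0 : ℝ) 1 |
        keepDigits b S x ∈ Set.Icc (a / 2 + k) (a / 2 + ℓ / 2 + k)} :=
        (measure_mono hcover).trans (measure_biUnion_finset_le _ _)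
    _ ≤ ∑ _k ∈ Finset.Icc (F - 1) (F + 1), ENNReal.ofReal (3 * (b : ℝ) ^ (C + α) * ℓ ^ α) := by
        refine Finset.sum_le_sum fun k _ => (volume_keepDigits_mem_Icc_le_rpow hb hα hS
          (by linarith) (by linarith)).trans (ENNReal.ofReal_le_ofReal ?_)
        rw [add_right_comm, add_sub_cancel_left]
        gcongr
        linarith
    _ = ENNReal.ofReal (9 * (b : ℝ) ^ (C + α) * ℓ ^ α) := by
        rw [Finset.sum_const, Int.card_Icc, show F + 1 + 1 - (F - 1) = 3 by ring, nsmul_eq_mul,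
          ← ENNReal.ofReal_natCast, ← ENNReal.ofReal_mul (by norm_num)]
        congr 1
        push_cast
        ring

end DigitMeasure

lemma Nat.count_add_of_forall_lt {p : ℕ → Prop} [DecidablePred p] {a d : ℕ}
    (h : ∀ k < d, p (a + k)) : Nat.count p (a + d) = Nat.count p a + d := by
  rw [Nat.count_add, Nat.count_eq_card_filter_range (fun k => p (a + k)), Finset.filter_true_of_mem
    fun k hk => h k (Finset.mem_range.1 hk), Finset.card_range]

section Blocks

variable {α : ℝ}

/-- The `+ 1` gives `2 · 4⁻ᵖ ≤ 1 / (2 · (4ᵐ)^(2 - α))` for `p = blockEnd α m`, the estimate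
behind `E ⊆ A(4ᵐ, 1 - α)`. -/
def blockEnd (α : ℝ) (m : ℕ) : ℕ := ⌈(2 - α) * m⌉₊ + 1

/-- Chosen so that `p_j + 2 ≤ (1 - α)² m_{j+1}` (with `m_j = blockStart α j` and
`p_j = blockEnd α m_j`): this keeps at least `α n - 1` of the first `n` digits free. -/
def blockStart (α : ℝ) : ℕ → ℕ
  | 0 => 0
  | j + 1 => ⌈((blockEnd α (blockStart α j) : ℝ) + 2) / (1 - α) ^ 2⌉₊

def freeDigits (α : ℝ) : Set ℕ :=
  (⋃ j, Set.Ico (blockStart α j) (blockEnd α (blockStart α j)))ᶜ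

lemma le_blockEnd (α : ℝ) (m : ℕ) : (2 - α) * m + 1 ≤ blockEnd α m := by
  rw [blockEnd]
  push_cast
  linarith [Nat.le_ceil ((2 - α) * m)]

lemma lt_blockEnd (hα : α ≤ 1) (m : ℕ) : m < blockEnd α m := by
  have := le_blockEnd α m
  exact_mod_cast (by nlinarith [m.cast_nonneg (α := ℝ)] : (m : ℝ) < blockEnd α m)

lemma blockEnd_le (hα : α ≤ 2) (m : ℕ) : (blockEnd α m : ℝ) ≤ (2 - α) * m + 2 := by
  rw [blockEnd]
  push_cast
  linarith [Nat.ceil_lt_add_one (mul_nonneg (by linarith : (0 : ℝ) ≤ 2 - α) m.cast_nonneg)]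

lemma blockEnd_mono (hα : α ≤ 2) : Monotone (blockEnd α) := fun k l hkl =>
  Nat.add_le_add_right (Nat.ceil_mono (by gcongr)) 1

lemma blockEnd_add_two_le (hα : α ≠ 1) (j : ℕ) :
    (blockEnd α (blockStart α j) : ℝ) + 2 ≤ (1 - α) ^ 2 * blockStart α (j + 1) := by
  have h : 0 < (1 - α) ^ 2 := by positivity [sub_ne_zero.2 hα.symm]
  rw [blockStart, ← div_le_iff₀' h]
  exact Nat.le_ceil _

lemma blockEnd_lt_blockStart_succ (hα : α ∈ Set.Ioo 0 1) (j : ℕ) :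
    blockEnd α (blockStart α j) < blockStart α (j + 1) := by
  have h := blockEnd_add_two_le hα.2.ne j
  have h1 : (1 - α) ^ 2 ≤ 1 := by nlinarith [hα.1, hα.2]
  have h2 : (1 - α) ^ 2 * blockStart α (j + 1) ≤ blockStart α (j + 1) :=
    mul_le_of_le_one_left (Nat.cast_nonneg _) h1
  exact_mod_cast (by linarith : (blockEnd α (blockStart α j) : ℝ) < blockStart α (j + 1))

lemma blockStart_strictMono (hα : α ∈ Set.Ioo 0 1) : StrictMono (blockStart α) :=
  strictMono_nat_of_lt_succ fun j =>
    (lt_blockEnd hα.2.le _).trans (blockEnd_lt_blockStart_succ hα j)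

lemma disjoint_freeDigits_block (j : ℕ) :
    Disjoint (freeDigits α) (Set.Ico (blockStart α j) (blockEnd α (blockStart α j))) :=
  disjoint_compl_left_iff_subset.2 (Set.subset_iUnion_of_subset j subset_rfl)

lemma mem_freeDigits_of_mem_gap (hα : α ∈ Set.Ioo 0 1) {j i : ℕ}
    (hi : i ∈ Set.Ico (blockEnd α (blockStart α j)) (blockStart α (j + 1))) : i ∈ freeDigits α := by
  simp only [freeDigits, Set.mem_compl_iff, Set.mem_iUnion, Set.mem_Ico, not_exists, not_and,
    not_lt]
  intro k hk
  rcases le_or_gt k j with hkj | hkj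
  · exact (blockEnd_mono (by linarith [hα.2]) ((blockStart_strictMono hα).monotone hkj)).trans hi.1
  · exact absurd (hi.2.trans_le ((blockStart_strictMono hα).monotone hkj)) hk.not_gt

lemma count_freeDigits_of_mem_gap (hα : α ∈ Set.Ioo 0 1) [DecidablePred (· ∈ freeDigits α)]
    {j n : ℕ} (hpn : blockEnd α (blockStart α j) ≤ n) (hnm : n ≤ blockStart α (j + 1)) :
    Nat.count (· ∈ freeDigits α) n = Nat.count (· ∈ freeDigits α) (blockEnd α (blockStart α j)) +
      (n - blockEnd α (blockStart α j)) := by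
  have hfree : ∀ k < n - blockEnd α (blockStart α j),
      blockEnd α (blockStart α j) + k ∈ freeDigits α := fun k hk =>
    mem_freeDigits_of_mem_gap hα ⟨Nat.le_add_right _ _, by omega⟩
  rw [← Nat.count_add_of_forall_lt hfree, Nat.add_sub_cancel' hpn]

lemma le_count_freeDigits_of_le_blockEnd (hα : α ∈ Set.Ioo 0 1)
    [DecidablePred (· ∈ freeDigits α)] (j : ℕ) :
    ∀ n ≤ blockEnd α (blockStart α j), α * n - 1 ≤ Nat.count (· ∈ freeDigits α) n := by
  set m := blockStart α
  set p := fun j => blockEnd α (m j)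
  induction j with
  | zero =>
    intro n hn
    have hn1 : (n : ℝ) ≤ 1 := by exact_mod_cast hn.trans (by simp [m, blockStart, blockEnd])
    nlinarith [(Nat.count (· ∈ freeDigits α) n).cast_nonneg (α := ℝ), hα.1, hα.2]
  | succ j ih =>
    intro n hn
    rcases le_or_gt n (p j) with hnj | hnj
    · exact ih n hnj
    -- past the block `[m j, p j)`, free digits accumulate until `m (j + 1)`
    set n' := min n (m (j + 1))
    have hpn' : p j ≤ n' := le_min hnj.le (blockEnd_lt_blockStart_succ hα j).le
    have hmono : (Nat.count (· ∈ freeDigits α) n' : ℝ) ≤ Nat.count (· ∈ freeDigits α) n := by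
      exact_mod_cast Nat.count_monotone _ (min_le_left _ _)
    have hcount : α * p j - 1 + (n' - p j) ≤ (Nat.count (· ∈ freeDigits α) n' : ℝ) := by
      rw [count_freeDigits_of_mem_gap hα hpn' (min_le_right _ _), Nat.cast_add,
        Nat.cast_sub hpn']
      linarith [ih (p j) le_rfl]
    rcases le_total n (m (j + 1)) with hnm | hnm
    · have hn' : (n' : ℝ) = n := by simp [n', hnm]
      have hpn : (p j : ℝ) ≤ n := by exact_mod_cast hnj.le
      nlinarith [mul_nonneg (sub_nonneg.2 hα.2.le) (sub_nonneg.2 hpn)]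
    · have hn' : (n' : ℝ) = m (j + 1) := by simp [n', hnm]
      have hend := blockEnd_le (by linarith [hα.2]) (m (j + 1))
      have hgrow := blockEnd_add_two_le hα.2.ne j
      have hn_le : (n : ℝ) ≤ p (j + 1) := by exact_mod_cast hn
      have hp : (0 : ℝ) ≤ p j := Nat.cast_nonneg _
      nlinarith [hα.1, hα.2]

lemma le_count_freeDigits (hα : α ∈ Set.Ioo 0 1) [DecidablePred (· ∈ freeDigits α)] (n : ℕ) :
    α * n - 1 ≤ Nat.count (· ∈ freeDigits α) n :=
  le_count_freeDigits_of_le_blockEnd hα n n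
    ((blockStart_strictMono hα).le_apply.trans (lt_blockEnd hα.2.le _).le)

end Blocks

lemma coe_two_mul_keepDigits_mem_nbhdGrid {α : ℝ} (hα : α ∈ Set.Ioo 0 1) (x : ℝ) (j : ℕ) :
    ((2 * keepDigits 4 (freeDigits α) x : ℝ) : Circle2) ∈
      nbhdGrid (4 ^ blockStart α j) (1 - α) := by
  set m := blockStart α j
  set p := blockEnd α m
  obtain ⟨K, hK₁, hK₂⟩ := exists_keepDigits_mem_Icc_of_disjoint (b := 4)
    (lt_blockEnd hα.2.le m).le (disjoint_freeDigits_block j) x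
  refine coe_mem_nbhdGrid K ?_
  have hexp : (((4 ^ m : ℕ) : ℝ)) ^ ((1 : ℝ) + (1 - α)) = 4 ^ ((2 - α) * m) := by
    rw [Nat.cast_pow, ← Real.rpow_natCast, ← Real.rpow_mul (by norm_num)]
    ring_nf
  have hp : (4 : ℝ) ^ ((2 - α) * m) * 4 ≤ 4 ^ p := by
    rw [← Real.rpow_add_one (by norm_num), ← Real.rpow_natCast]
    exact Real.rpow_le_rpow_of_exponent_le (by norm_num) (le_blockEnd α m)
  have htail : 2 * ((4 : ℝ) ^ p)⁻¹ ≤ 1 / (2 * 4 ^ ((2 - α) * m)) := by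
    calc 2 * ((4 : ℝ) ^ p)⁻¹ ≤ 2 * ((4 : ℝ) ^ ((2 - α) * m) * 4)⁻¹ := by gcongr
      _ = 1 / (2 * 4 ^ ((2 - α) * m)) := by field_simp; norm_num
  push_cast at hK₁ hK₂
  have hgrid : 2 * ((K : ℤ) : ℝ) / ((4 ^ m : ℕ) : ℝ) = 2 * (K * ((4 : ℝ) ^ m)⁻¹) := by
    push_cast
    ring
  rw [hexp, hgrid, abs_le]
  constructor <;> linarith

lemma rpow_le_two_rpow_sub_mul_rpow {ℓ s α : ℝ} (hℓ : 0 ≤ ℓ) (hℓ2 : ℓ ≤ 2) (hs : 0 ≤ s)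
    (hsα : s ≤ α) : ℓ ^ α ≤ 2 ^ (α - s) * ℓ ^ s := by
  rw [← sub_add_cancel α s, Real.rpow_add_of_nonneg hℓ (sub_nonneg.2 hsα) hs, add_sub_cancel_right]
  gcongr

/-- For every `α ∈ (0,1)`, with `δ = 1 - α`, there are `(N_j)` and a closed `E ⊆ 𝕋` with
`E ⊆ A(N_j, 1-α)` for all `j`, such that for every `s ∈ (0, α)` there are `c_s > 0` and a
probability measure `μ` concentrated on `E` with `μ(I) ≤ c_s·|I|^s` for every arc `I`. -/
theorem exists_frostman_measure_on_nbhdGrid_set (α : ℝ) (hα : α ∈ Set.Ioo (0 : ℝ) 1) :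
    ∃ N : ℕ → ℕ, StrictMono N ∧ (∀ j, 0 < N j) ∧
      ∃ E : Set Circle2, IsClosed E ∧ (∀ j, E ⊆ nbhdGrid (N j) (1 - α)) ∧
        ∀ s ∈ Set.Ioo (0 : ℝ) α, ∃ c : ℝ, 0 < c ∧
          ∃ μ : Measure Circle2, IsProbabilityMeasure μ ∧ μ Eᶜ = 0 ∧
            ∀ a ℓ : ℝ, 0 ≤ ℓ →
              μ ((fun t : ℝ => (t : Circle2)) '' Set.Icc a (a + ℓ)) ≤
                ENNReal.ofReal (c * ℓ ^ s) := by
  classical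
  refine ⟨fun j => 4 ^ blockStart α j,
    fun i j hij => Nat.pow_lt_pow_right (by norm_num) (blockStart_strictMono hα hij),
    fun j => by positivity, ⋂ j, nbhdGrid (4 ^ blockStart α j) (1 - α),
    isClosed_iInter fun j => isClosed_nbhdGrid _ _, fun j => Set.iInter_subset _ j, fun s hs => ?_⟩
  set c := 9 * (4 : ℝ) ^ (1 + α) * 2 ^ (α - s)
  refine ⟨c + 1, by positivity, keepDigitsMeasure 4 (freeDigits α), inferInstance,
    keepDigitsMeasure_compl_eq_zero
      (MeasurableSet.iInter fun j => (isClosed_nbhdGrid _ _).measurableSet)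
      fun x _ => Set.mem_iInter.2 (coe_two_mul_keepDigits_mem_nbhdGrid hα x), fun a ℓ hℓ => ?_⟩
  have hℓs : 0 ≤ ℓ ^ s := Real.rpow_nonneg hℓ s
  rcases le_or_gt ℓ 2 with hℓ2 | hℓ2
  · refine (keepDigitsMeasure_arc_le (by norm_num) hα.1 (le_count_freeDigits hα) a hℓ hℓ2).trans
      (ENNReal.ofReal_le_ofReal ?_)
    have := rpow_le_two_rpow_sub_mul_rpow hℓ hℓ2 hs.1.le hs.2.le
    push_cast
    calc 9 * (4 : ℝ) ^ (1 + α) * ℓ ^ α ≤ c * ℓ ^ s := by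
          rw [show c * ℓ ^ s = 9 * (4 : ℝ) ^ (1 + α) * (2 ^ (α - s) * ℓ ^ s) by ring]
          gcongr
      _ ≤ (c + 1) * ℓ ^ s := by linarith
  · have h1 : 1 ≤ ℓ ^ s := Real.one_le_rpow (by linarith) hs.1.le
    refine prob_le_one.trans (ENNReal.one_le_ofReal.2 ?_)
    nlinarith [show 0 ≤ c by positivity]

end
end

section
/- For every α ∈ (0,1), setting δ = 1 − α, there exists a strictly increasing sequence (N_j)_{j≥1} of positive integers such that the set Ẽ = {x ∈ 𝕋 : sup_j N_j^{1+δ}·dist(x, (2/N_j)ℤ) < ∞} has Hausdorff dimension at least α. -/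
open MeasureTheory Filter Metric Set

noncomputable section

/-!
Write `t ∈ [0, 1)` in binary as `∑ bₖ 2^{-k}` and move the `k`-th digit to position `σ k`:
`spread σ t = ∑ bₖ 2^{-σ k}`. For strictly increasing `σ`, points of `[0, 1)` at distance about
`2^{-P}` stay at distance at least `2^{-σ P}` after spreading; if `α σ P ≤ P + 1` this is
`≳ 2^{-P/α}`, so `spread σ` has an `α`-Hölder inverse and the image of `[0, 1)` has dimension at
least `α`. If `σ` jumps at `p` from `n = σ p` to `σ (p + 1) ≥ (2 - α)(n + 1)`, then spreading
only the first `p` digits of `t` gives a point of `2^{-n}ℤ` within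
`2^{1 - σ (p + 1)} ≤ 2 N^{-(2 - α)}` of `spread σ t`, where `N = 2^{n + 1}`. The greedy `gapSeq α`
jumps whenever the bound `α σ P ≤ P + 1` allows it, which happens infinitely often because
`α (2 - α) < 1`.
-/

lemma AddCircle.dist_coe_coe_of_abs_sub_le {p x y : ℝ} [Fact (0 < p)] (h : |x - y| ≤ p / 2) :
    dist (x : AddCircle p) (y : AddCircle p) = |x - y| := by
  have hp : (0 : ℝ) < p := Fact.out
  rw [dist_eq_norm, ← AddCircle.coe_sub, AddCircle.norm_coe_eq_abs_iff _ hp.ne', abs_of_pos hp]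
  exact h

lemma ofReal_mul_dimH_le_dimH_image_of_dist_le {X Y : Type*} [MetricSpace X] [MetricSpace Y]
    {f : X → Y} {s : Set X} {C α : ℝ} (hα : 0 < α)
    (h : ∀ u ∈ s, ∀ v ∈ s, dist u v ≤ C * dist (f u) (f v) ^ α) :
    ENNReal.ofReal α * dimH s ≤ dimH (f '' s) := by
  rcases s.eq_empty_or_nonempty with rfl | ⟨x, -⟩
  · simp
  have : Nonempty X := ⟨x⟩
  have hinj : InjOn f s := fun u hu v hv huv =>
    dist_le_zero.mp <| by simpa [huv, Real.zero_rpow hα.ne'] using h u hu v hv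
  have hHolder : HolderOnWith C.toNNReal α.toNNReal (Function.invFunOn f s) (f '' s) := by
    rintro _ ⟨u, hu, rfl⟩ _ ⟨v, hv, rfl⟩
    rw [hinj.leftInvOn_invFunOn hu, hinj.leftInvOn_invFunOn hv, edist_dist, edist_dist,
      Real.coe_toNNReal _ hα.le, ENNReal.ofReal_rpow_of_nonneg dist_nonneg hα.le]
    exact (ENNReal.ofReal_le_ofReal (h u hu v hv)).trans_eq
      (ENNReal.ofReal_mul' (by positivity))
  have := hHolder.dimH_image_le (Real.toNNReal_pos.mpr hα)
  rw [hinj.invFunOn_image Subset.rfl, ENNReal.le_div_iff_mul_le (Or.inl (by simpa using hα))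
    (Or.inl ENNReal.coe_ne_top), mul_comm] at this
  exact this

lemma natCast_mod_two_le_one (n : ℕ) : ((n % 2 : ℕ) : ℝ) ≤ 1 :=
  Nat.cast_le_one.mpr (Nat.le_of_lt_succ (Nat.mod_lt n two_pos))

def digitWeight (σ : ℕ → ℕ) (p : ℕ) : ℝ := ((2 : ℝ) ^ σ p)⁻¹

/-- `∑ bₖ 2^{-σ k}`, where `0.b₁…b_Q` is the binary expansion of `n / 2 ^ Q` (so `b_Q = n % 2`). -/
def spreadNat (σ : ℕ → ℕ) : ℕ → ℕ → ℝ
  | 0, _ => 0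
  | Q + 1, n => spreadNat σ Q (n / 2) + (n % 2 : ℕ) * digitWeight σ (Q + 1)

def spreadTrunc (σ : ℕ → ℕ) (Q : ℕ) (t : ℝ) : ℝ := spreadNat σ Q ⌊2 ^ Q * t⌋₊

/-- The series `∑ bₖ 2^{-σ k}`, as the supremum of its increasing partial sums. -/
def spread (σ : ℕ → ℕ) (t : ℝ) : ℝ := ⨆ Q, spreadTrunc σ Q t

section spread

variable {σ : ℕ → ℕ}

lemma digitWeight_pos (p : ℕ) : 0 < digitWeight σ p := by
  unfold digitWeight; positivity

lemma digitWeight_le_one (p : ℕ) : digitWeight σ p ≤ 1 :=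
  inv_le_one_of_one_le₀ (one_le_pow₀ one_le_two)

lemma two_mul_digitWeight_succ_le (hσ : StrictMono σ) (p : ℕ) :
    2 * digitWeight σ (p + 1) ≤ digitWeight σ p := by
  have h : σ p + 1 ≤ σ (p + 1) := hσ p.lt_succ_self
  calc 2 * digitWeight σ (p + 1) ≤ 2 * ((2 : ℝ) ^ (σ p + 1))⁻¹ := by
        unfold digitWeight; gcongr; norm_num
    _ = digitWeight σ p := by rw [digitWeight, pow_succ]; field_simp

lemma spreadNat_nonneg (Q n : ℕ) : 0 ≤ spreadNat σ Q n := by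
  induction Q generalizing n with
  | zero => rfl
  | succ Q ih => exact add_nonneg (ih _) (mul_nonneg (Nat.cast_nonneg _) (digitWeight_pos _).le)

lemma spreadNat_add_digitWeight_le_of_lt (hσ : StrictMono σ) {Q a b : ℕ} (hab : a < b)
    (hb : b < 2 ^ Q) : spreadNat σ Q a + digitWeight σ Q ≤ spreadNat σ Q b := by
  induction Q generalizing a b with
  | zero => omega
  | succ Q ih =>
    have hw := two_mul_digitWeight_succ_le hσ Q
    have hw₀ := (digitWeight_pos (σ := σ) (Q + 1)).le
    rcases (Nat.div_le_div_right (c := 2) hab.le).lt_or_eq with hlt | heq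
    · have := ih hlt (by rw [pow_succ] at hb; omega)
      have := natCast_mod_two_le_one a
      have := spreadNat_nonneg (σ := σ) Q (b / 2)
      simp only [spreadNat]
      nlinarith [mul_nonneg (Nat.cast_nonneg (α := ℝ) (b % 2)) hw₀]
    · have ha : a % 2 = 0 := by omega
      have hb : b % 2 = 1 := by omega
      simp [spreadNat, heq, ha, hb]

lemma spreadNat_le_of_le (hσ : StrictMono σ) {Q a b : ℕ} (hab : a ≤ b) (hb : b < 2 ^ Q) :
    spreadNat σ Q a ≤ spreadNat σ Q b := by
  rcases hab.lt_or_eq with hlt | rfl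
  · linarith [spreadNat_add_digitWeight_le_of_lt hσ hlt hb, digitWeight_pos (σ := σ) Q]
  · rfl

lemma spreadNat_mul_two_pow (P Q m : ℕ) : spreadNat σ (P + Q) (m * 2 ^ Q) = spreadNat σ P m := by
  induction Q with
  | zero => simp
  | succ Q ih =>
    rw [← add_assoc, spreadNat, pow_succ, ← mul_assoc, Nat.mul_div_cancel _ two_pos,
      Nat.mul_mod_left, ih]
    simp

lemma exists_spreadNat_eq_div (hσ : Monotone σ) (Q n : ℕ) :
    ∃ k : ℕ, spreadNat σ Q n = k / 2 ^ σ Q := by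
  induction Q generalizing n with
  | zero => exact ⟨0, by simp [spreadNat]⟩
  | succ Q ih =>
    obtain ⟨k, hk⟩ := ih (n / 2)
    obtain ⟨d, hd⟩ := Nat.exists_eq_add_of_le (hσ Q.le_succ)
    refine ⟨k * 2 ^ d + n % 2, ?_⟩
    rw [spreadNat, hk, digitWeight, hd, pow_add]
    push_cast
    field_simp

lemma spreadTrunc_succ (Q : ℕ) (t : ℝ) : spreadTrunc σ (Q + 1) t =
    spreadTrunc σ Q t + ((⌊2 ^ (Q + 1) * t⌋₊ % 2 : ℕ) : ℝ) * digitWeight σ (Q + 1) := by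
  have hfloor : ⌊(2 : ℝ) ^ (Q + 1) * t⌋₊ / 2 = ⌊(2 : ℝ) ^ Q * t⌋₊ := by
    rw [← Nat.floor_div_natCast, pow_succ]
    congr 1
    push_cast
    ring
  rw [spreadTrunc, spreadNat, hfloor, spreadTrunc]

lemma spreadTrunc_nonneg (Q : ℕ) (t : ℝ) : 0 ≤ spreadTrunc σ Q t := spreadNat_nonneg _ _

lemma spreadTrunc_succ_le (Q : ℕ) (t : ℝ) :
    spreadTrunc σ (Q + 1) t ≤ spreadTrunc σ Q t + digitWeight σ (Q + 1) := by
  rw [spreadTrunc_succ]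
  exact add_le_add_right (mul_le_of_le_one_left (digitWeight_pos _).le
    (natCast_mod_two_le_one _)) _

lemma monotone_spreadTrunc (t : ℝ) : Monotone (spreadTrunc σ · t) :=
  monotone_nat_of_le_succ fun Q => by
    rw [spreadTrunc_succ]
    exact le_add_of_nonneg_right (mul_nonneg (Nat.cast_nonneg _) (digitWeight_pos _).le)

lemma antitone_spreadTrunc_add_digitWeight (hσ : StrictMono σ) (t : ℝ) :
    Antitone (fun Q => spreadTrunc σ Q t + digitWeight σ Q) :=
  antitone_nat_of_succ_le fun Q => by
    linarith [spreadTrunc_succ_le (σ := σ) Q t, two_mul_digitWeight_succ_le hσ Q]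

lemma spreadTrunc_le_digitWeight_zero (hσ : StrictMono σ) (Q : ℕ) (t : ℝ) :
    spreadTrunc σ Q t ≤ digitWeight σ 0 := by
  have h := antitone_spreadTrunc_add_digitWeight hσ t (Nat.zero_le Q)
  have h₀ : spreadTrunc σ 0 t = 0 := rfl
  dsimp only at h
  linarith [digitWeight_pos (σ := σ) Q]

lemma monotoneOn_spreadTrunc (hσ : StrictMono σ) (Q : ℕ) :
    MonotoneOn (spreadTrunc σ Q) (Ico 0 1) := by
  intro u hu v hv huv
  refine spreadNat_le_of_le hσ (Nat.floor_mono (by gcongr)) ?_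
  rw [Nat.floor_lt (by have := hv.1; positivity)]
  push_cast
  nlinarith [hv.2, pow_pos (two_pos : (0 : ℝ) < 2) Q]

lemma spreadTrunc_div_two_pow (P Q m : ℕ) :
    spreadTrunc σ (P + Q) (m / 2 ^ P) = spreadNat σ P m := by
  have : (2 : ℝ) ^ (P + Q) * (m / 2 ^ P) = ((m * 2 ^ Q : ℕ) : ℝ) := by
    rw [pow_add]; push_cast; field_simp
  rw [spreadTrunc, this, Nat.floor_natCast, spreadNat_mul_two_pow]

lemma bddAbove_range_spreadTrunc (hσ : StrictMono σ) (t : ℝ) :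
    BddAbove (range (spreadTrunc σ · t)) :=
  ⟨digitWeight σ 0, by rintro _ ⟨Q, rfl⟩; exact spreadTrunc_le_digitWeight_zero hσ Q t⟩

lemma spreadTrunc_le_spread (hσ : StrictMono σ) (Q : ℕ) (t : ℝ) :
    spreadTrunc σ Q t ≤ spread σ t :=
  le_ciSup (bddAbove_range_spreadTrunc hσ t) Q

lemma spread_nonneg (hσ : StrictMono σ) (t : ℝ) : 0 ≤ spread σ t :=
  (spreadTrunc_nonneg 0 t).trans (spreadTrunc_le_spread hσ 0 t)

lemma spread_le_digitWeight_zero (hσ : StrictMono σ) (t : ℝ) : spread σ t ≤ digitWeight σ 0 :=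
  ciSup_le fun Q => spreadTrunc_le_digitWeight_zero hσ Q t

lemma spread_le_spreadTrunc_add_digitWeight (hσ : StrictMono σ) (Q : ℕ) (t : ℝ) :
    spread σ t ≤ spreadTrunc σ Q t + digitWeight σ Q := by
  refine ciSup_le fun Q' => ?_
  rcases le_total Q' Q with h | h
  · linarith [monotone_spreadTrunc (σ := σ) t h, digitWeight_pos (σ := σ) Q]
  · linarith [antitone_spreadTrunc_add_digitWeight hσ t h, digitWeight_pos (σ := σ) Q']

lemma monotoneOn_spread (hσ : StrictMono σ) : MonotoneOn (spread σ) (Ico 0 1) :=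
  fun _ hu _ hv huv => ciSup_le fun Q =>
    (monotoneOn_spreadTrunc hσ Q hu hv huv).trans (spreadTrunc_le_spread hσ Q _)

lemma spread_div_two_pow (hσ : StrictMono σ) (P m : ℕ) :
    spread σ (m / 2 ^ P) = spreadNat σ P m := by
  refine le_antisymm (ciSup_le fun Q => ?_) ?_
  · calc spreadTrunc σ Q (m / 2 ^ P)
        ≤ spreadTrunc σ (P + Q) (m / 2 ^ P) := monotone_spreadTrunc _ (Nat.le_add_left Q P)
      _ = spreadNat σ P m := spreadTrunc_div_two_pow P Q m
  · rw [← spreadTrunc_div_two_pow P 0]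
    exact spreadTrunc_le_spread hσ _ _

lemma spread_add_digitWeight_le (hσ : StrictMono σ) {u v : ℝ} (hu : 0 ≤ u) (hv : v < 1) {P : ℕ}
    (huv : u + 2 / 2 ^ P ≤ v) : spread σ u + digitWeight σ P ≤ spread σ v := by
  have h2P : (0 : ℝ) < 2 ^ P := by positivity
  set m := ⌊2 ^ P * u⌋₊
  have hm : (m : ℝ) ≤ 2 ^ P * u := Nat.floor_le (by positivity)
  have hm' : 2 ^ P * u < m + 1 := Nat.lt_floor_add_one _
  have hu₁ : u ≤ ((m + 1 : ℕ) : ℝ) / 2 ^ P := by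
    rw [le_div_iff₀ h2P]; push_cast; linarith
  have hv₂ : ((m + 2 : ℕ) : ℝ) / 2 ^ P ≤ v := by
    calc ((m + 2 : ℕ) : ℝ) / 2 ^ P = m / 2 ^ P + 2 / 2 ^ P := by push_cast; ring
      _ ≤ u + 2 / 2 ^ P := by gcongr; rwa [div_le_iff₀ h2P, mul_comm]
      _ ≤ v := huv
  have hm₂ : m + 2 < 2 ^ P := by
    have : ((m + 2 : ℕ) : ℝ) < 2 ^ P := by rw [← div_lt_one h2P]; linarith
    exact_mod_cast this
  have hIco : ∀ k ≤ m + 2, ((k : ℕ) : ℝ) / 2 ^ P ∈ Ico (0 : ℝ) 1 := fun k hk =>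
    ⟨by positivity, by
      rw [div_lt_one h2P]; exact_mod_cast (show k < 2 ^ P by omega)⟩
  calc spread σ u + digitWeight σ P
      ≤ spread σ ((m + 1 : ℕ) / 2 ^ P) + digitWeight σ P := by
        gcongr
        exact monotoneOn_spread hσ ⟨hu, hu₁.trans_lt (hIco _ (by omega)).2⟩ (hIco _ (by omega)) hu₁
    _ = spreadNat σ P (m + 1) + digitWeight σ P := by rw [spread_div_two_pow hσ]
    _ ≤ spreadNat σ P (m + 2) := spreadNat_add_digitWeight_le_of_lt hσ (by omega) hm₂
    _ = spread σ ((m + 2 : ℕ) / 2 ^ P) := by rw [spread_div_two_pow hσ]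
    _ ≤ spread σ v :=
        monotoneOn_spread hσ (hIco _ le_rfl) ⟨(hIco _ le_rfl).1.trans hv₂, hv⟩ hv₂

lemma inv_two_pow_succ_le_digitWeight_rpow {α : ℝ} {P : ℕ} (h : α * σ P ≤ P + 1) :
    ((2 : ℝ) ^ (P + 1))⁻¹ ≤ digitWeight σ P ^ α := by
  rw [digitWeight, Real.inv_rpow (by positivity), ← Real.rpow_natCast, ← Real.rpow_natCast,
    ← Real.rpow_mul zero_le_two]
  gcongr
  · norm_num
  · push_cast; linarith

lemma sub_le_spread_sub_rpow (hσ : StrictMono σ) {α : ℝ} (hα : 0 < α)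
    (hdens : ∀ P, α * σ P ≤ P + 1) {u v : ℝ} (hu : 0 ≤ u) (huv : u ≤ v) (hv : v < 1) :
    v - u ≤ 8 * (spread σ v - spread σ u) ^ α := by
  rcases huv.eq_or_lt with rfl | huv
  · simp [Real.zero_rpow hα.ne']
  -- `P = n + 1` is the dyadic scale of `v - u`: `2 / 2 ^ P < v - u ≤ 8 / 2 ^ (P + 1)`
  obtain ⟨n, hn, hn'⟩ := exists_nat_pow_near (x := 2 / (v - u))
    (by rw [le_div_iff₀ (by linarith)]; linarith) one_lt_two
  have h2n : (0 : ℝ) < 2 ^ n := by positivity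
  have hgap : u + 2 / 2 ^ (n + 1) ≤ v := by
    rw [div_lt_iff₀ (by linarith), ← div_lt_iff₀' (by positivity)] at hn'
    linarith
  have hr : v - u ≤ 8 * ((2 : ℝ) ^ (n + 1 + 1))⁻¹ := by
    rw [le_div_iff₀ (by linarith), mul_comm] at hn
    rw [pow_succ, pow_succ]
    field_simp
    linarith
  calc v - u ≤ 8 * ((2 : ℝ) ^ (n + 1 + 1))⁻¹ := hr
    _ ≤ 8 * digitWeight σ (n + 1) ^ α := by
        gcongr; exact_mod_cast inv_two_pow_succ_le_digitWeight_rpow (hdens (n + 1))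
    _ ≤ 8 * (spread σ v - spread σ u) ^ α := by
        gcongr
        · exact (digitWeight_pos _).le
        · linarith [spread_add_digitWeight_le hσ hu hv hgap]

lemma infDist_spread_grid_le (hσ : StrictMono σ) (p : ℕ) (t : ℝ) :
    infDist (spread σ t : Circle2) (grid (2 ^ (σ p + 1))) ≤ 2 * digitWeight σ (p + 1) := by
  obtain ⟨k, hk⟩ := exists_spreadNat_eq_div hσ.monotone p ⌊2 ^ p * t⌋₊
  have hmem : (spreadTrunc σ p t : Circle2) ∈ grid (2 ^ (σ p + 1)) := by
    refine ⟨k, ?_⟩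
    rw [spreadTrunc, hk, pow_succ]
    push_cast
    congr 1
    field_simp
  have hlo := spreadTrunc_le_spread hσ p t
  have hhi : spread σ t ≤ spreadTrunc σ p t + 2 * digitWeight σ (p + 1) := by
    linarith [spread_le_spreadTrunc_add_digitWeight hσ (p + 1) t, spreadTrunc_succ_le (σ := σ) p t]
  have hw := (two_mul_digitWeight_succ_le hσ p).trans (digitWeight_le_one p)
  calc infDist (spread σ t : Circle2) (grid (2 ^ (σ p + 1)))
      ≤ dist (spread σ t : Circle2) (spreadTrunc σ p t : Circle2) := infDist_le_dist_of_mem hmem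
    _ = spread σ t - spreadTrunc σ p t := by
        rw [AddCircle.dist_coe_coe_of_abs_sub_le, abs_of_nonneg] <;>
          [linarith; rw [abs_of_nonneg] <;> linarith]
    _ ≤ 2 * digitWeight σ (p + 1) := by linarith

lemma coe_spread_mem_Etilde (hσ : StrictMono σ) {δ : ℝ} {p : ℕ → ℕ}
    (hp : ∀ j, (1 + δ) * (σ (p j) + 1) ≤ σ (p j + 1)) (t : ℝ) :
    (spread σ t : Circle2) ∈ Etilde (fun j => 2 ^ (σ (p j) + 1)) δ := by
  refine ⟨2, fun j => ?_⟩
  have hN : ((2 ^ (σ (p j) + 1) : ℕ) : ℝ) ^ (1 + δ) ≤ 2 ^ σ (p j + 1) := by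
    rw [Nat.cast_pow, Nat.cast_ofNat, ← Real.rpow_natCast, ← Real.rpow_natCast,
      ← Real.rpow_mul zero_le_two]
    gcongr
    · norm_num
    · push_cast; linarith [hp j]
  calc ((2 ^ (σ (p j) + 1) : ℕ) : ℝ) ^ (1 + δ) * infDist (spread σ t : Circle2) (grid _)
      ≤ 2 ^ σ (p j + 1) * (2 * digitWeight σ (p j + 1)) := by
        gcongr
        exacts [infDist_nonneg, infDist_spread_grid_le hσ (p j) t]
    _ = 2 := by rw [digitWeight]; field_simp

lemma dist_le_dist_coe_spread_rpow (hσ : StrictMono σ) {α : ℝ} (hα : 0 < α)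
    (hdens : ∀ P, α * σ P ≤ P + 1) {u v : ℝ} (hu : u ∈ Ico 0 1) (hv : v ∈ Ico 0 1) :
    dist u v ≤ 8 * dist (spread σ u : Circle2) (spread σ v : Circle2) ^ α := by
  wlog huv : u ≤ v generalizing u v
  · rw [dist_comm, dist_comm (spread σ u : Circle2)]
    exact this hv hu (le_of_not_ge huv)
  have hmono := monotoneOn_spread hσ hu hv huv
  have hle := (spread_le_digitWeight_zero hσ v).trans (digitWeight_le_one 0)
  have h₀ := spread_nonneg hσ u
  rw [dist_comm, Real.dist_eq, abs_of_nonneg (by linarith),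
    AddCircle.dist_coe_coe_of_abs_sub_le (by rw [abs_of_nonpos] <;> linarith),
    abs_of_nonpos (by linarith), neg_sub]
  exact sub_le_spread_sub_rpow hσ hα hdens hu.1 huv hv.2

end spread

def gapSeq (α : ℝ) : ℕ → ℕ
  | 0 => 1
  | p + 1 =>
    if α * ⌈(2 - α) * (gapSeq α p + 1)⌉₊ ≤ p + 2 then ⌈(2 - α) * (gapSeq α p + 1)⌉₊
    else gapSeq α p + 1

section gapSeq

variable {α : ℝ}

lemma gapSeq_lt_succ (hα : α < 1) (p : ℕ) : gapSeq α p < gapSeq α (p + 1) := by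
  rw [gapSeq]
  split_ifs
  · rw [Nat.lt_ceil]
    nlinarith [(gapSeq α p).cast_nonneg (α := ℝ)]
  · exact Nat.lt_succ_self _

lemma strictMono_gapSeq (hα : α < 1) : StrictMono (gapSeq α) :=
  strictMono_nat_of_lt_succ (gapSeq_lt_succ hα)

lemma mul_gapSeq_le (hα : α ≤ 1) (P : ℕ) : α * gapSeq α P ≤ P + 1 := by
  induction P with
  | zero => simpa [gapSeq] using hα
  | succ P ih =>
    rw [gapSeq]
    split_ifs with h
    · exact_mod_cast h
    · push_cast; linarith

lemma frequently_gapSeq_jump (hα : α ∈ Ioo 0 1) :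
    ∃ᶠ p in atTop, (2 - α) * (gapSeq α p + 1) ≤ gapSeq α (p + 1) := by
  rw [frequently_atTop]
  intro p₀
  by_contra! hno
  have hstep : ∀ p ≥ p₀, gapSeq α (p + 1) = gapSeq α p + 1 ∧
      (p + 2 : ℝ) < α * ⌈(2 - α) * (gapSeq α p + 1)⌉₊ := by
    intro p hp
    have := hno p hp
    rw [gapSeq] at this ⊢
    split_ifs at this ⊢ with h
    · exact absurd (Nat.le_ceil _) this.not_ge
    · exact ⟨rfl, not_le.mp h⟩
  have hlin : ∀ k, gapSeq α (p₀ + k) = gapSeq α p₀ + k := by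
    intro k
    induction k with
    | zero => rfl
    | succ k ih => rw [← add_assoc, (hstep _ le_self_add).1, ih, add_assoc]
  obtain ⟨k, hk⟩ := exists_nat_gt (α * ((2 - α) * (gapSeq α p₀ + 1) + 1) / (1 - α) ^ 2)
  have hk' := (hstep (p₀ + k) le_self_add).2
  rw [hlin] at hk'
  have hceil := Nat.ceil_lt_add_one (a := (2 - α) * ((gapSeq α p₀ + k : ℕ) + 1)) <|
    mul_nonneg (by linarith [hα.2]) (by positivity)
  rw [div_lt_iff₀ (by nlinarith [hα.2])] at hk
  push_cast at hceil hk'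
  -- `α (2 - α) = 1 - (1 - α) ^ 2`, so `α ⌈(2 - α)(σ p + 1)⌉` falls behind `p + 2`
  nlinarith [hα.1, hα.2, (gapSeq α p₀).cast_nonneg (α := ℝ)]

end gapSeq

/-- For every `α ∈ (0,1)`, with `δ = 1 - α`, there is a strictly increasing sequence of
positive integers `(N_j)` such that `dim_H Ẽ ≥ α`. -/
theorem exists_seq_dimH_Etilde_ge (α : ℝ) (hα : α ∈ Set.Ioo (0 : ℝ) 1) :
    ∃ N : ℕ → ℕ, StrictMono N ∧ (∀ j, 0 < N j) ∧
      ENNReal.ofReal α ≤ dimH (Etilde N (1 - α)) := by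
  have hσ := strictMono_gapSeq hα.2
  obtain ⟨p, hp, hjump⟩ := extraction_of_frequently_atTop (frequently_gapSeq_jump hα)
  refine ⟨fun j => 2 ^ (gapSeq α (p j) + 1),
    fun i j hij => Nat.pow_lt_pow_right one_lt_two (by simpa using hσ (hp hij)),
    fun j => by positivity, ?_⟩
  have hdim := ofReal_mul_dimH_le_dimH_image_of_dist_le hα.1 fun u hu v hv =>
    dist_le_dist_coe_spread_rpow hσ hα.1 (mul_gapSeq_le hα.2.le) hu hv
  rw [Real.dimH_of_nonempty_interior (by simp [interior_Ico]), Module.finrank_self,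
    Nat.cast_one, mul_one] at hdim
  refine hdim.trans (dimH_mono ?_)
  rintro _ ⟨t, -, rfl⟩
  refine coe_spread_mem_Etilde hσ (fun j => ?_) t
  rw [show 1 + (1 - α) = 2 - α by ring]
  exact hjump j

end
end
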